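/- arXiv:2408.11419 — 8 statements merged into one kernel-verified Lean document; each statement's English description precedes it below -/
import Mathlib

section
/- Dual Cauchy identity: for all positive integers n, k and all elements x₁,…,x_n, y₁,…,y_k of a commutative ring, Σ_λ s_λ(x₁,…,x_n)·s_{λ′}(y₁,…,y_k) = Π_{i=1}^{n} Π_{j=1}^{k} (1 + x_i y_j), where the sum runs over all partitions λ with at most n parts satisfying λ₁ ≤ k (i.e. all partitions contained in the n×k rectangle). -/
open scoped BigOperators

noncomputable section

/-- A partition with at most `n` parts each of size at most `k`, encoded 0-indexed:
`lam i` is the `(i+1)`-st part. -/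
def IsPartitionIn (n k : ℕ) (lam : ℕ → ℕ) : Prop :=
  (∀ ⦃i j : ℕ⦄, i ≤ j → lam j ≤ lam i) ∧ (∀ i, n ≤ i → lam i = 0) ∧ lam 0 ≤ k

/-- The conjugate partition: `conjugate lam j = #{i | lam i ≥ j + 1}` (0-indexed). -/
def conjugate (lam : ℕ → ℕ) (j : ℕ) : ℕ := Set.ncard {i : ℕ | j < lam i}

/-- A semistandard Young tableau of shape `lam` with entries in `{1, …, N}`,
encoded as a function on cells `(r, c)` (0-indexed) that vanishes off the diagram:
rows weakly increase, columns strictly increase. -/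
def IsSSYT (N : ℕ) (lam : ℕ → ℕ) (T : ℕ → ℕ → ℕ) : Prop :=
  (∀ r c, c < lam r → 1 ≤ T r c ∧ T r c ≤ N) ∧
  (∀ r c, ¬ c < lam r → T r c = 0) ∧
  (∀ r c₁ c₂, c₁ ≤ c₂ → c₂ < lam r → T r c₁ ≤ T r c₂) ∧
  (∀ r₁ r₂ c, r₁ < r₂ → c < lam r₂ → T r₁ c < T r₂ c)

/-- The monomial weight `∏_{i=1}^{N} x_i ^ (# entries of `T` equal to `i`)` of a tableau. -/
def ssytWeight {R : Type*} [CommRing R] (N : ℕ) (x : ℕ → R) (T : ℕ → ℕ → ℕ) : R :=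
  ∏ i ∈ Finset.Icc 1 N, x i ^ Set.ncard {rc : ℕ × ℕ | T rc.1 rc.2 = i}

/-- The Schur polynomial `s_lam(x_1, …, x_N)`, as the generating function of
semistandard Young tableaux of shape `lam` with entries in `{1, …, N}`. -/
def schur {R : Type*} [CommRing R] (N : ℕ) (lam : ℕ → ℕ) (x : ℕ → R) : R :=
  ∑ᶠ T ∈ {T : ℕ → ℕ → ℕ | IsSSYT N lam T}, ssytWeight N x T

/-- The skew Howe measure `μ_{n,k}` on partitions in the `n × k` rectangle. -/
def skewHoweMeasure (n k : ℕ) (x y : ℕ → ℝ) (lam : ℕ → ℕ) : ℝ :=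
  schur n lam x * schur k (conjugate lam) y /
    ∏ i ∈ Finset.Icc 1 n, ∏ j ∈ Finset.Icc 1 k, (1 + x i * y j)

/-- `h : [0,1] → ℝ` is piecewise `C¹`. -/
def PiecewiseC1 (h : ℝ → ℝ) : Prop :=
  ∃ (M : ℕ) (a : ℕ → ℝ), 0 < M ∧ a 0 = 0 ∧ a M = 1 ∧ (∀ m < M, a m < a (m + 1)) ∧
    ∀ m < M, ∃ H : ℝ → ℝ, ContDiffOn ℝ 1 H (Set.Icc (a m) (a (m + 1))) ∧
      ∀ s ∈ Set.Ioo (a m) (a (m + 1)), H s = h s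

end


open Finset

noncomputable section

/-! ### Auxiliary definitions -/

/-- `lam` is a partition with at most `A` parts (no bound on part sizes). -/
def Ptn (A : ℕ) (lam : ℕ → ℕ) : Prop :=
  (∀ ⦃i j : ℕ⦄, i ≤ j → lam j ≤ lam i) ∧ ∀ i, A ≤ i → lam i = 0

/-- `lam / mu` is a horizontal strip (including containment). -/
def HS (lam mu : ℕ → ℕ) : Prop := (∀ i, mu i ≤ lam i) ∧ ∀ i, lam (i + 1) ≤ mu i

/-- `lam / nu` is a vertical strip (including containment). -/
def VS (lam nu : ℕ → ℕ) : Prop := ∀ i, nu i ≤ lam i ∧ lam i ≤ nu i + 1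

/-- Number of cells of `lam / mu` (for `mu ⊆ lam`). -/
def dwt (lam mu : ℕ → ℕ) : ℕ := ∑ᶠ i, (lam i - mu i)

lemma dwt_eq_sum_range {lam mu : ℕ → ℕ} (B : ℕ) (h : ∀ i, B ≤ i → lam i = 0) :
    dwt lam mu = ∑ i ∈ range B, (lam i - mu i) := by
  apply finsum_eq_sum_of_support_subset
  intro i hi
  simp only [Function.mem_support] at hi
  simp only [coe_range, Set.mem_Iio]
  by_contra hB
  exact hi (by have := h i (by omega); omega)

/-! ### Finiteness lemmas -/

lemma finite_funs (A B : ℕ) :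
    {f : ℕ → ℕ | (∀ i, f i ≤ B) ∧ ∀ i, A ≤ i → f i = 0}.Finite := by
  rw [← Set.finite_coe_iff]
  refine Finite.of_injective (fun f => (fun i : Fin A => (⟨f.1 i, by
    have := f.2.1 i; omega⟩ : Fin (B + 1)))) ?_
  rintro ⟨f, hf⟩ ⟨g, hg⟩ h
  ext i
  show f i = g i
  by_cases hi : i < A
  · exact congrArg Fin.val (congrFun h ⟨i, hi⟩)
  · rw [hf.2 i (by omega), hg.2 i (by omega)]

lemma finite_tabs (N A C : ℕ) :
    {T : ℕ → ℕ → ℕ | (∀ r c, T r c ≤ N) ∧ ∀ r c, A ≤ r ∨ C ≤ c → T r c = 0}.Finite := by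
  rw [← Set.finite_coe_iff]
  refine Finite.of_injective (fun T => (fun r : Fin A => fun c : Fin C =>
    (⟨T.1 r c, by have := T.2.1 r c; omega⟩ : Fin (N + 1)))) ?_
  rintro ⟨f, hf⟩ ⟨g, hg⟩ h
  ext r c
  show f r c = g r c
  by_cases hr : r < A
  · by_cases hc : c < C
    · exact congrArg Fin.val (congrFun (congrFun h ⟨r, hr⟩) ⟨c, hc⟩)
    · rw [hf.2 r c (by omega), hg.2 r c (by omega)]
  · rw [hf.2 r c (by omega), hg.2 r c (by omega)]

lemma ssyt_subset (N : ℕ) {lam : ℕ → ℕ} (A C : ℕ) (h0 : ∀ i, A ≤ i → lam i = 0)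
    (h1 : ∀ i, lam i ≤ C) :
    {T : ℕ → ℕ → ℕ | IsSSYT N lam T} ⊆
      {T : ℕ → ℕ → ℕ | (∀ r c, T r c ≤ N) ∧ ∀ r c, A ≤ r ∨ C ≤ c → T r c = 0} := by
  intro T hT
  obtain ⟨hb, hz, _, _⟩ := hT
  constructor
  · intro r c
    by_cases h : c < lam r
    · exact (hb r c h).2
    · rw [hz r c h]; omega
  · intro r c hrc
    apply hz
    rcases hrc with h | h
    · rw [h0 r h]; omega
    · have := h1 r; omega

lemma ssyt_finite (N : ℕ) {lam : ℕ → ℕ} (A C : ℕ) (h0 : ∀ i, A ≤ i → lam i = 0)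
    (h1 : ∀ i, lam i ≤ C) : {T : ℕ → ℕ → ℕ | IsSSYT N lam T}.Finite :=
  (finite_tabs N A C).subset (ssyt_subset N A C h0 h1)

lemma schur_eq_sum {R : Type*} [CommRing R] (N : ℕ) {lam : ℕ → ℕ} (x : ℕ → R)
    (hfin : {T : ℕ → ℕ → ℕ | IsSSYT N lam T}.Finite) :
    schur N lam x = ∑ T ∈ hfin.toFinset, ssytWeight N x T :=
  finsum_mem_eq_finite_toFinset_sum _ hfin

/-! ### Basic SSYT facts -/

lemma ssyt_zero (N : ℕ) {lam : ℕ → ℕ} (h : ∀ i, lam i = 0) :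
    {T : ℕ → ℕ → ℕ | IsSSYT N lam T} = {fun _ _ => 0} := by
  ext T
  simp only [Set.mem_setOf_eq, Set.mem_singleton_iff]
  constructor
  · intro hT
    funext r c
    exact hT.2.1 r c (by rw [h r]; omega)
  · rintro rfl
    refine ⟨fun r c hc => absurd hc (by rw [h r]; omega), fun _ _ _ => rfl,
      fun r c₁ c₂ _ hc => absurd hc (by rw [h r]; omega),
      fun r₁ r₂ c _ hc => absurd hc (by rw [h r₂]; omega)⟩

lemma ssytWeight_zero {R : Type*} [CommRing R] (N : ℕ) (x : ℕ → R) :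
    ssytWeight N x (fun _ _ => 0) = 1 := by
  unfold ssytWeight
  apply Finset.prod_eq_one
  intro i hi
  simp only [Finset.mem_Icc] at hi
  have : {rc : ℕ × ℕ | (0 : ℕ) = i} = ∅ := by
    ext rc
    simp only [Set.mem_setOf_eq, Set.mem_empty_iff_false, iff_false]
    omega
  rw [this, Set.ncard_empty, pow_zero]

lemma schur_zero_shape {R : Type*} [CommRing R] (N : ℕ) {lam : ℕ → ℕ} (x : ℕ → R)
    (h : ∀ i, lam i = 0) : schur N lam x = 1 := by
  unfold schur
  rw [ssyt_zero N h, finsum_mem_singleton, ssytWeight_zero]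

/-- In an SSYT, the entry in row `r` (0-indexed) is at least `r + 1`. -/
lemma ssyt_entry_lower (N : ℕ) {lam : ℕ → ℕ} {T : ℕ → ℕ → ℕ}
    (hmono : ∀ ⦃i j : ℕ⦄, i ≤ j → lam j ≤ lam i) (hT : IsSSYT N lam T) :
    ∀ r c, c < lam r → r + 1 ≤ T r c := by
  intro r
  induction r with
  | zero => intro c hc; exact (hT.1 0 c hc).1
  | succ r ih =>
    intro c hc
    have hc' : c < lam r := lt_of_lt_of_le hc (hmono (Nat.le_succ r))
    have := hT.2.2.2 r (r + 1) c (Nat.lt_succ_self r) hc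
    have := ih c hc'
    omega

lemma schur_eq_zero_of_tall {R : Type*} [CommRing R] (N : ℕ) {lam : ℕ → ℕ} (x : ℕ → R)
    (hmono : ∀ ⦃i j : ℕ⦄, i ≤ j → lam j ≤ lam i) (h : 0 < lam N) : schur N lam x = 0 := by
  unfold schur
  have : {T : ℕ → ℕ → ℕ | IsSSYT N lam T} = ∅ := by
    ext T
    simp only [Set.mem_setOf_eq, Set.mem_empty_iff_false, iff_false]
    intro hT
    have h1 := ssyt_entry_lower N hmono hT N 0 h
    have h2 := (hT.1 N 0 h).2
    omega
  rw [this, finsum_mem_empty]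

/-! ### Down-closed finsets of naturals -/

lemma mem_iff_lt_card_of_downclosed (F : Finset ℕ)
    (h : ∀ a b : ℕ, a ≤ b → b ∈ F → a ∈ F) : ∀ a, a ∈ F ↔ a < F.card := by
  intro a
  constructor
  · intro ha
    have hsub : Finset.range (a + 1) ⊆ F := by
      intro b hb
      rw [Finset.mem_range] at hb
      exact h b a (by omega) ha
    have := Finset.card_le_card hsub
    rw [Finset.card_range] at this
    omega
  · intro ha
    by_contra hna
    have hsub : F ⊆ Finset.range a := by
      intro b hb
      rw [Finset.mem_range]
      by_contra hba
      exact hna (h a b (by omega) hb)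
    have := Finset.card_le_card hsub
    rw [Finset.card_range] at this
    omega

end

/-! ### Conjugate partitions -/

section Conj

lemma conj_eq_card {A : ℕ} {lam : ℕ → ℕ} (h : Ptn A lam) (j : ℕ) :
    conjugate lam j = ((range A).filter (fun i => j < lam i)).card := by
  unfold conjugate
  have hset : {i : ℕ | j < lam i} = ↑((range A).filter (fun i => j < lam i)) := by
    ext i
    simp only [Set.mem_setOf_eq, coe_filter, mem_range, Set.mem_setOf_eq]
    constructor
    · intro hi
      refine ⟨?_, hi⟩
      by_contra hA
      have := h.2 i (by omega)
      omega
    · exact fun hi => hi.2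
  rw [hset, Set.ncard_coe_finset]

lemma conj_lt_iff {A : ℕ} {lam : ℕ → ℕ} (h : Ptn A lam) (i j : ℕ) :
    i < conjugate lam j ↔ j < lam i := by
  rw [conj_eq_card h]
  have hdc : ∀ a b : ℕ, a ≤ b → b ∈ (range A).filter (fun i => j < lam i) →
      a ∈ (range A).filter (fun i => j < lam i) := by
    intro a b hab hb
    simp only [mem_filter, mem_range] at hb ⊢
    exact ⟨by omega, lt_of_lt_of_le hb.2 (h.1 hab)⟩
  rw [← mem_iff_lt_card_of_downclosed _ hdc i]
  simp only [mem_filter, mem_range]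
  constructor
  · exact fun hi => hi.2
  · intro hi
    refine ⟨?_, hi⟩
    by_contra hA
    have := h.2 i (by omega)
    omega

lemma conj_le {A : ℕ} {lam : ℕ → ℕ} (h : Ptn A lam) (j : ℕ) : conjugate lam j ≤ A := by
  rw [conj_eq_card h]
  exact le_trans (Finset.card_filter_le _ _) (by rw [Finset.card_range])

lemma conj_ptn {A K : ℕ} {lam : ℕ → ℕ} (h : Ptn A lam) (hK : lam 0 ≤ K) :
    Ptn K (conjugate lam) := by
  constructor
  · intro j j' hj
    have : ∀ t, t < conjugate lam j' → t < conjugate lam j := by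
      intro t ht
      rw [conj_lt_iff h] at ht ⊢
      omega
    exact le_of_forall_lt this
  · intro j hj
    by_contra hne
    have : 0 < conjugate lam j := by omega
    rw [conj_lt_iff h] at this
    omega

lemma conj_conj {A : ℕ} {lam : ℕ → ℕ} (h : Ptn A lam) :
    conjugate (conjugate lam) = lam := by
  have hc : Ptn (lam 0) (conjugate lam) := conj_ptn h le_rfl
  funext i
  have key : ∀ t, t < conjugate (conjugate lam) i ↔ t < lam i := by
    intro t
    rw [conj_lt_iff hc, conj_lt_iff h]
  have h1 := key (conjugate (conjugate lam) i)
  have h2 := key (lam i)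
  omega

lemma hs_conj_iff_vs {A : ℕ} {lam nu : ℕ → ℕ} (hl : Ptn A lam) (hn : Ptn A nu) :
    HS (conjugate lam) (conjugate nu) ↔ VS lam nu := by
  constructor
  · intro ⟨h1, h2⟩
    intro i
    constructor
    · have : ∀ t, t < nu i → t < lam i := by
        intro t ht
        rw [← conj_lt_iff hn] at ht
        rw [← conj_lt_iff hl]
        exact lt_of_lt_of_le ht (h1 t)
      exact le_of_forall_lt this
    · by_contra hcon
      push_neg at hcon
      have hni : nu i + 1 < lam i := hcon
      have : i < conjugate lam (nu i + 1) := by rw [conj_lt_iff hl]; omega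
      have : i < conjugate nu (nu i) := lt_of_lt_of_le this (h2 (nu i))
      rw [conj_lt_iff hn] at this
      omega
  · intro hvs
    constructor
    · intro j
      have : ∀ t, t < conjugate nu j → t < conjugate lam j := by
        intro t ht
        rw [conj_lt_iff hn] at ht
        rw [conj_lt_iff hl]
        exact lt_of_lt_of_le ht (hvs t).1
      exact le_of_forall_lt this
    · intro j
      have : ∀ t, t < conjugate lam (j + 1) → t < conjugate nu j := by
        intro t ht
        rw [conj_lt_iff hl] at ht
        rw [conj_lt_iff hn]
        have := (hvs t).2
        omega
      exact le_of_forall_lt this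

lemma wt_conj {A K : ℕ} {lam : ℕ → ℕ} (h : Ptn A lam) (hK : lam 0 ≤ K) :
    ∑ j ∈ range K, conjugate lam j = ∑ i ∈ range A, lam i := by
  have : ∀ j ∈ range K, conjugate lam j = ∑ i ∈ range A, if j < lam i then 1 else 0 := by
    intro j _
    rw [conj_eq_card h, Finset.card_filter]
  rw [Finset.sum_congr rfl this, Finset.sum_comm]
  apply Finset.sum_congr rfl
  intro i _
  have hli : lam i ≤ K := le_trans (h.1 (Nat.zero_le i)) hK
  rw [← Finset.card_filter]
  have : (range K).filter (fun j => j < lam i) = range (lam i) := by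
    ext j
    simp only [mem_filter, mem_range]
    omega
  rw [this, Finset.card_range]

lemma dwt_conj {A K : ℕ} {lam nu : ℕ → ℕ} (hl : Ptn A lam) (hn : Ptn A nu)
    (hsub : ∀ i, nu i ≤ lam i) (hK : lam 0 ≤ K) :
    dwt (conjugate lam) (conjugate nu) = dwt lam nu := by
  have hcl : Ptn K (conjugate lam) := conj_ptn hl hK
  have hcn : Ptn K (conjugate nu) := conj_ptn hn (le_trans (hsub 0) hK)
  rw [dwt_eq_sum_range K hcl.2, dwt_eq_sum_range A hl.2]
  have hsubc : ∀ j, conjugate nu j ≤ conjugate lam j := by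
    intro j
    refine le_of_forall_lt fun t ht => ?_
    rw [conj_lt_iff hn] at ht
    rw [conj_lt_iff hl]
    exact lt_of_lt_of_le ht (hsub t)
  rw [Finset.sum_tsub_distrib _ (fun i _ => hsubc i),
    Finset.sum_tsub_distrib _ (fun i _ => hsub i),
    wt_conj hl hK, wt_conj hn (le_trans (hsub 0) hK)]

lemma conj_zero_fn : conjugate (fun _ => 0) = fun _ => 0 := by
  funext j
  unfold conjugate
  have : {i : ℕ | j < 0} = ∅ := by ext i; simp
  rw [this, Set.ncard_empty]

lemma conj_pos {A : ℕ} {lam : ℕ → ℕ} (h : Ptn A lam) {j : ℕ} (hj : j < lam 0) :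
    0 < conjugate lam j := by
  rw [conj_lt_iff h]; exact hj

end Conj

/-! ### The branching rule -/

section Branch

variable {R : Type*} [CommRing R]

/-- The number of entries `≤ N` in row `r` of `T` (a tableau with entries `≤ N+1`). -/
def rmu (N : ℕ) (lam : ℕ → ℕ) (T : ℕ → ℕ → ℕ) (r : ℕ) : ℕ :=
  ((range (lam r)).filter (fun c => T r c < N + 1)).card

/-- Restriction of a tableau to a subshape. -/
def Trest (mu : ℕ → ℕ) (T : ℕ → ℕ → ℕ) : ℕ → ℕ → ℕ :=
  fun r c => if c < mu r then T r c else 0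

/-- Extension of a tableau of shape `mu` to shape `lam` by entries `N+1`. -/
def Text (N : ℕ) (lam mu : ℕ → ℕ) (T' : ℕ → ℕ → ℕ) : ℕ → ℕ → ℕ :=
  fun r c => if c < mu r then T' r c else if c < lam r then N + 1 else 0

variable {N : ℕ} {lam : ℕ → ℕ} {T : ℕ → ℕ → ℕ}

lemma row_struct (hT : IsSSYT (N + 1) lam T) (r c : ℕ) :
    c < rmu N lam T r ↔ c < lam r ∧ T r c < N + 1 := by
  have hdc : ∀ a b : ℕ, a ≤ b → b ∈ (range (lam r)).filter (fun c => T r c < N + 1) →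
      a ∈ (range (lam r)).filter (fun c => T r c < N + 1) := by
    intro a b hab hb
    simp only [mem_filter, mem_range] at hb ⊢
    refine ⟨by omega, ?_⟩
    have := hT.2.2.1 r a b hab hb.1
    omega
  rw [rmu, ← mem_iff_lt_card_of_downclosed _ hdc c]
  simp only [mem_filter, mem_range]

lemma entry_eq_top (hT : IsSSYT (N + 1) lam T) {r c : ℕ} (hc : c < lam r)
    (hc' : ¬ c < rmu N lam T r) : T r c = N + 1 := by
  rw [row_struct hT] at hc'
  have := (hT.1 r c hc).2
  omega

lemma rmu_le (hT : IsSSYT (N + 1) lam T) (r : ℕ) : rmu N lam T r ≤ lam r :=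
  le_trans (Finset.card_filter_le _ _) (by rw [Finset.card_range])

lemma hs_rmu (hl : Ptn (N + 1) lam) (hT : IsSSYT (N + 1) lam T) : HS lam (rmu N lam T) := by
  refine ⟨rmu_le hT, fun r => ?_⟩
  by_contra hcon
  push_neg at hcon
  set c := rmu N lam T r with hc
  have hc1 : c < lam (r + 1) := hcon
  have hc2 : c < lam r := lt_of_lt_of_le hc1 (hl.1 (Nat.le_succ r))
  have h3 := hT.2.2.2 r (r + 1) c (Nat.lt_succ_self r) hc1
  have h4 := (hT.1 (r + 1) c hc1).2
  have : c < rmu N lam T r := (row_struct hT r c).2 ⟨hc2, by omega⟩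
  omega

lemma ptn_rmu (hl : Ptn (N + 1) lam) (hT : IsSSYT (N + 1) lam T) : Ptn N (rmu N lam T) := by
  constructor
  · have : ∀ r, rmu N lam T (r + 1) ≤ rmu N lam T r := by
      intro r
      by_contra hcon
      push_neg at hcon
      set c := rmu N lam T r with hc
      have hc1 : c < rmu N lam T (r + 1) := hcon
      rw [row_struct hT] at hc1
      have hc2 : c < lam r := lt_of_lt_of_le hc1.1 (hl.1 (Nat.le_succ r))
      have h3 := hT.2.2.2 r (r + 1) c (Nat.lt_succ_self r) hc1.1
      have : c < rmu N lam T r := (row_struct hT r c).2 ⟨hc2, by omega⟩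
      omega
    exact fun i j hij => antitone_nat_of_succ_le this hij
  · intro r hr
    by_contra hcon
    have h0 : 0 < rmu N lam T r := by omega
    rw [row_struct hT] at h0
    have := ssyt_entry_lower (N + 1) hl.1 hT r 0 h0.1
    omega

lemma trest_ssyt (hl : Ptn (N + 1) lam) (hT : IsSSYT (N + 1) lam T) :
    IsSSYT N (rmu N lam T) (Trest (rmu N lam T) T) := by
  have hptn := ptn_rmu hl hT
  refine ⟨?_, ?_, ?_, ?_⟩
  · intro r c hc
    simp only [Trest]
    rw [if_pos hc]
    rw [row_struct hT] at hc
    have := (hT.1 r c hc.1).1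
    omega
  · intro r c hc
    simp only [Trest]
    rw [if_neg hc]
  · intro r c₁ c₂ h12 hc2
    have hc1 : c₁ < rmu N lam T r := by omega
    simp only [Trest]
    rw [if_pos hc1, if_pos hc2]
    exact hT.2.2.1 r c₁ c₂ h12 ((row_struct hT r c₂).1 hc2).1
  · intro r₁ r₂ c h12 hc2
    have hc1 : c < rmu N lam T r₁ := lt_of_lt_of_le hc2 (hptn.1 (le_of_lt h12))
    simp only [Trest]
    rw [if_pos hc1, if_pos hc2]
    exact hT.2.2.2 r₁ r₂ c h12 ((row_struct hT r₂ c).1 hc2).1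

lemma weight_split (hN : 0 < N + 1) (hl : Ptn (N + 1) lam) (hT : IsSSYT (N + 1) lam T)
    (x : ℕ → R) :
    ssytWeight (N + 1) x T
      = ssytWeight N x (Trest (rmu N lam T) T) * x (N + 1) ^ dwt lam (rmu N lam T) := by
  unfold ssytWeight
  rw [Finset.prod_Icc_succ_top (by omega : 1 ≤ N + 1)]
  congr 1
  · -- entries 1..N agree
    apply Finset.prod_congr rfl
    intro i hi
    simp only [Finset.mem_Icc] at hi
    congr 2
    ext rc
    obtain ⟨r, c⟩ := rc
    simp only [Set.mem_setOf_eq]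
    by_cases hc : c < rmu N lam T r
    · simp only [Trest]
      rw [if_pos hc]
    · simp only [Trest]
      rw [if_neg hc]
      constructor
      · intro hTi
        exfalso
        by_cases hcl : c < lam r
        · have := entry_eq_top hT hcl hc
          omega
        · rw [hT.2.1 r c hcl] at hTi
          omega
      · intro h0
        omega
  · -- count of entries equal to N+1
    congr 1
    have hset : {rc : ℕ × ℕ | T rc.1 rc.2 = N + 1}
        = ↑((range (N + 1)).biUnion (fun r =>
            (Finset.Ico (rmu N lam T r) (lam r)).map
              ⟨fun c => (r, c), fun a b hab => by simpa using hab⟩)) := by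
      ext rc
      obtain ⟨r, c⟩ := rc
      simp only [Set.mem_setOf_eq, coe_biUnion, Set.mem_iUnion, coe_map,
        Function.Embedding.coeFn_mk, Set.mem_image, coe_Ico, Set.mem_Ico, mem_coe, mem_range]
      constructor
      · intro hTrc
        have hcl : c < lam r := by
          by_contra hcl
          rw [hT.2.1 r c hcl] at hTrc
          omega
        have hrN : r < N + 1 := by
          have := ssyt_entry_lower (N + 1) hl.1 hT r c hcl
          have := (hT.1 r c hcl).2
          omega
        have hge : rmu N lam T r ≤ c := by
          by_contra hlt
          push_neg at hlt
          rw [row_struct hT] at hlt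
          omega
        exact ⟨r, hrN, c, ⟨hge, hcl⟩, rfl⟩
      · rintro ⟨r', hr', c', ⟨hge, hcl⟩, heq⟩
        have e1 : r' = r := congrArg Prod.fst heq
        have e2 : c' = c := congrArg Prod.snd heq
        subst e1; subst e2
        exact entry_eq_top hT hcl (by omega)
    rw [hset, Set.ncard_coe_finset, Finset.card_biUnion, dwt_eq_sum_range (N + 1) hl.2]
    · apply Finset.sum_congr rfl
      intro r _
      rw [Finset.card_map, Nat.card_Ico]
    · intro r _ r' _ hrr
      simp only [Finset.disjoint_left]
      rintro ⟨a, b⟩ hab hab'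
      simp only [Finset.mem_map, Function.Embedding.coeFn_mk] at hab hab'
      obtain ⟨c1, _, h1⟩ := hab
      obtain ⟨c2, _, h2⟩ := hab'
      exact hrr (congrArg Prod.fst (h1.trans h2.symm))

variable {mu : ℕ → ℕ} {T' : ℕ → ℕ → ℕ}

lemma text_ssyt (hl : Ptn (N + 1) lam) (hmu : Ptn N mu) (hhs : HS lam mu)
    (hT' : IsSSYT N mu T') : IsSSYT (N + 1) lam (Text N lam mu T') := by
  have key : ∀ r₁ r₂ c, r₁ < r₂ → c < lam r₂ → c < mu r₁ := by
    intro r₁ r₂ c h12 hc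
    have h1 : lam r₂ ≤ lam (r₁ + 1) := hl.1 (by omega)
    have h2 := hhs.2 r₁
    omega
  refine ⟨?_, ?_, ?_, ?_⟩
  · intro r c hc
    simp only [Text]
    by_cases h : c < mu r
    · rw [if_pos h]
      have := hT'.1 r c h
      omega
    · rw [if_neg h, if_pos hc]
      omega
  · intro r c hc
    simp only [Text]
    rw [if_neg (by have := hhs.1 r; omega), if_neg hc]
  · intro r c₁ c₂ h12 hc2
    simp only [Text]
    by_cases h2 : c₂ < mu r
    · rw [if_pos h2, if_pos (by omega)]
      exact hT'.2.2.1 r c₁ c₂ h12 h2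
    · rw [if_neg h2, if_pos hc2]
      by_cases h1 : c₁ < mu r
      · rw [if_pos h1]
        have := (hT'.1 r c₁ h1).2
        omega
      · rw [if_neg h1, if_pos (by omega)]
  · intro r₁ r₂ c h12 hc2
    have hc1 : c < mu r₁ := key r₁ r₂ c h12 hc2
    simp only [Text]
    rw [if_pos hc1]
    by_cases h2 : c < mu r₂
    · rw [if_pos h2]
      exact hT'.2.2.2 r₁ r₂ c h12 h2
    · rw [if_neg h2, if_pos hc2]
      have := (hT'.1 r₁ c hc1).2
      omega

lemma rmu_text (hl : Ptn (N + 1) lam) (hmu : Ptn N mu) (hhs : HS lam mu)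
    (hT' : IsSSYT N mu T') : rmu N lam (Text N lam mu T') = mu := by
  funext r
  rw [rmu]
  have : (range (lam r)).filter (fun c => Text N lam mu T' r c < N + 1)
      = range (mu r) := by
    ext c
    simp only [mem_filter, mem_range]
    constructor
    · rintro ⟨hcl, hlt⟩
      by_contra h
      rw [Text, if_neg h, if_pos hcl] at hlt
      omega
    · intro h
      refine ⟨by have := hhs.1 r; omega, ?_⟩
      rw [Text, if_pos h]
      have := (hT'.1 r c h).2
      omega
  rw [this, Finset.card_range]

lemma trest_text (hhs : HS lam mu) (hT' : IsSSYT N mu T') :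
    Trest mu (Text N lam mu T') = T' := by
  funext r c
  simp only [Trest, Text]
  by_cases h : c < mu r
  · rw [if_pos h, if_pos h]
  · rw [if_neg h, (hT'.2.1 r c h)]

lemma text_trest (hT : IsSSYT (N + 1) lam T) :
    Text N lam (rmu N lam T) (Trest (rmu N lam T) T) = T := by
  funext r c
  simp only [Text, Trest]
  by_cases h : c < rmu N lam T r
  · rw [if_pos h, if_pos h]
  · rw [if_neg h]
    by_cases hcl : c < lam r
    · rw [if_pos hcl, entry_eq_top hT hcl h]
    · rw [if_neg hcl, hT.2.1 r c hcl]

/-- The branching rule for Schur polynomials. -/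
lemma schur_branching {lam : ℕ → ℕ} (N : ℕ) (hl : Ptn (N + 1) lam) (x : ℕ → R) :
    schur (N + 1) lam x
      = ∑ᶠ mu ∈ {mu | Ptn N mu ∧ HS lam mu},
          schur N mu x * x (N + 1) ^ dwt lam mu := by
  classical
  have hbound : ∀ i, lam i ≤ lam 0 := fun i => hl.1 (Nat.zero_le i)
  have hTfin : {T : ℕ → ℕ → ℕ | IsSSYT (N + 1) lam T}.Finite :=
    ssyt_finite (N + 1) (N + 1) (lam 0) hl.2 hbound
  have hMfin : {mu | Ptn N mu ∧ HS lam mu}.Finite :=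
    (finite_funs N (lam 0)).subset
      (fun mu hmu => ⟨fun i => le_trans (hmu.2.1 i) (hbound i), hmu.1.2⟩)
  have hU := finite_tabs N N (lam 0)
  have hschur : ∀ mu, Ptn N mu ∧ HS lam mu →
      schur N mu x = ∑ T' ∈ hU.toFinset.filter (fun T' => IsSSYT N mu T'),
        ssytWeight N x T' := by
    intro mu hmu
    unfold schur
    have hseq : {T' : ℕ → ℕ → ℕ | IsSSYT N mu T'}
        = ↑(hU.toFinset.filter (fun T' => IsSSYT N mu T')) := by
      ext T'
      simp only [Set.mem_setOf_eq, coe_filter, Set.Finite.mem_toFinset, Set.mem_setOf_eq]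
      constructor
      · intro hT'
        refine ⟨ssyt_subset N N (lam 0) hmu.1.2
          (fun i => le_trans (hmu.2.1 i) (hbound i)) hT', hT'⟩
      · exact fun h => h.2
    rw [hseq, finsum_mem_coe_finset]
  rw [schur_eq_sum _ x hTfin, finsum_mem_eq_finite_toFinset_sum _ hMfin]
  have hRHS : ∑ mu ∈ hMfin.toFinset, schur N mu x * x (N + 1) ^ dwt lam mu
      = ∑ p ∈ hMfin.toFinset.sigma
          (fun mu => hU.toFinset.filter (fun T' => IsSSYT N mu T')),
          ssytWeight N x p.2 * x (N + 1) ^ dwt lam p.1 := by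
    rw [Finset.sum_sigma]
    apply Finset.sum_congr rfl
    intro mu hmu
    rw [hschur mu (hMfin.mem_toFinset.1 hmu), Finset.sum_mul]
  rw [hRHS]
  refine Finset.sum_nbij'
    (fun T => ⟨rmu N lam T, Trest (rmu N lam T) T⟩)
    (fun p => Text N lam p.1 p.2) ?_ ?_ ?_ ?_ ?_
  · intro T hT
    rw [Set.Finite.mem_toFinset] at hT
    rw [Finset.mem_sigma]
    refine ⟨hMfin.mem_toFinset.2 ⟨ptn_rmu hl hT, hs_rmu hl hT⟩, ?_⟩
    rw [Finset.mem_filter]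
    have hss := trest_ssyt hl hT
    refine ⟨hU.mem_toFinset.2 (ssyt_subset N N (lam 0) (ptn_rmu hl hT).2
      (fun i => le_trans (rmu_le hT i) (hbound i)) hss), hss⟩
  · intro p hp
    rw [Finset.mem_sigma] at hp
    obtain ⟨hp1, hp2⟩ := hp
    rw [hMfin.mem_toFinset] at hp1
    rw [Finset.mem_filter] at hp2
    rw [Set.Finite.mem_toFinset]
    exact text_ssyt hl hp1.1 hp1.2 hp2.2
  · intro T hT
    rw [Set.Finite.mem_toFinset] at hT
    exact text_trest hT
  · intro p hp
    rw [Finset.mem_sigma] at hp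
    obtain ⟨hp1, hp2⟩ := hp
    rw [hMfin.mem_toFinset] at hp1
    rw [Finset.mem_filter] at hp2
    have h1 := rmu_text hl hp1.1 hp1.2 hp2.2
    refine Sigma.ext h1 (heq_of_eq ?_)
    show Trest (rmu N lam (Text N lam p.1 p.2)) (Text N lam p.1 p.2) = p.2
    rw [h1]
    exact trest_text hp1.2 hp2.2
  · intro T hT
    rw [Set.Finite.mem_toFinset] at hT
    exact weight_split (by omega) hl hT x

end Branch

/-! ### The commutation lemma -/

section Commute

variable {R : Type*} [CommRing R]

lemma sum_powerset_pow {A : Finset ℕ} (t : R) :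
    ∑ S ∈ A.powerset, t ^ S.card = (t + 1) ^ A.card := by
  have h := Finset.prod_add (fun _ : ℕ => t) (fun _ : ℕ => (1 : R)) A
  simp only [Finset.prod_const, one_pow, mul_one] at h
  exact h.symm

lemma sum_indicator_card {B : ℕ} {S : Finset ℕ} (h : S ⊆ range B) :
    (∑ i ∈ range B, if i ∈ S then 1 else 0) = S.card := by
  classical
  have h2 : (range B).filter (fun i => i ∈ S) = S := by
    rw [Finset.filter_mem_eq_inter]
    exact Finset.inter_eq_right.2 h
  rw [← Finset.sum_filter, h2]
  exact (Finset.card_eq_sum_ones S).symm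

lemma card_SA_eq_card_SB (m : ℕ) {mu nu : ℕ → ℕ} (hmu : Ptn m mu) (hnu : Ptn m nu)
    (hc1 : ∀ i, mu i ≤ nu i + 1) (hc2 : ∀ i, nu (i + 1) ≤ mu i) :
    ((range (m + 1)).filter (fun i => mu i ≤ nu i ∧ (i = 0 ∨ nu i < mu (i - 1)))).card
      = ((range (m + 1)).filter (fun i => mu i ≤ nu i ∧ nu (i + 1) < mu i)).card + 1 := by
  classical
  rw [Finset.card_filter, Finset.card_filter]
  have key : ∀ i ∈ range (m + 1),
      ((if mu i ≤ nu i ∧ (i = 0 ∨ nu i < mu (i - 1)) then 1 else 0) : ℕ)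
        + (if mu i ≤ nu (i + 1) then 0 else 1)
      = (if mu i ≤ nu i ∧ nu (i + 1) < mu i then 1 else 0)
        + (if i = 0 then 1 else if mu (i - 1) ≤ nu i then 0 else 1) := by
    intro i _
    have hmm : mu i ≤ mu (i - 1) := hmu.1 (by omega)
    have hnn : nu (i + 1) ≤ nu i := hnu.1 (by omega)
    have h1 := hc1 i
    have h2 := hc2 i
    split_ifs <;> omega
  have hsum := Finset.sum_congr rfl key
  rw [Finset.sum_add_distrib, Finset.sum_add_distrib] at hsum
  have hE : (∑ i ∈ range (m + 1), if mu i ≤ nu (i + 1) then (0 : ℕ) else 1)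
      = ∑ i ∈ range m, if mu i ≤ nu (i + 1) then (0 : ℕ) else 1 := by
    rw [Finset.sum_range_succ, if_pos (by rw [hmu.2 m le_rfl]; omega), add_zero]
  have hF : (∑ i ∈ range (m + 1), if i = 0 then (1 : ℕ)
        else if mu (i - 1) ≤ nu i then 0 else 1)
      = (∑ i ∈ range m, if mu i ≤ nu (i + 1) then (0 : ℕ) else 1) + 1 := by
    rw [Finset.sum_range_succ']
    simp only [Nat.succ_ne_zero, if_false, Nat.add_sub_cancel, if_pos rfl]
    rfl
  rw [hE, hF] at hsum
  omega

lemma commutation (m : ℕ) {mu nu : ℕ → ℕ} (hmu : Ptn m mu) (hnu : Ptn m nu) (x y : R) :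
    (∑ᶠ lam ∈ {lam : ℕ → ℕ | HS lam mu ∧ VS lam nu}, x ^ dwt lam mu * y ^ dwt lam nu)
      = (1 + x * y) *
        ∑ᶠ rho ∈ {rho : ℕ → ℕ | VS mu rho ∧ HS nu rho}, x ^ dwt nu rho * y ^ dwt mu rho := by
  classical
  by_cases hcompat : (∀ i, mu i ≤ nu i + 1) ∧ ∀ i, nu (i + 1) ≤ mu i
  case neg =>
    have hL : {lam : ℕ → ℕ | HS lam mu ∧ VS lam nu} = ∅ := by
      ext lam
      simp only [Set.mem_setOf_eq, Set.mem_empty_iff_false, iff_false]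
      rintro ⟨⟨hs1, hs2⟩, hvs⟩
      exact hcompat ⟨fun i => le_trans (le_trans (hs1 i) (le_refl _)) (by
          have := (hvs i).2; have := hs1 i; omega),
        fun i => le_trans (by have := (hvs (i + 1)).1; omega) (hs2 i)⟩
    have hR : {rho : ℕ → ℕ | VS mu rho ∧ HS nu rho} = ∅ := by
      ext rho
      simp only [Set.mem_setOf_eq, Set.mem_empty_iff_false, iff_false]
      rintro ⟨hvs, ⟨hs1, hs2⟩⟩
      refine hcompat ⟨fun i => ?_, fun i => le_trans (hs2 i) ((hvs i).1)⟩
      have := (hvs i).2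
      have := hs1 i
      omega
    rw [hL, hR, finsum_mem_empty, finsum_mem_empty, mul_zero]
  case pos =>
  obtain ⟨hc1, hc2⟩ := hcompat
  set B := m + 1 with hB
  have hmuB : ∀ i, B ≤ i → mu i = 0 := fun i hi => hmu.2 i (by omega)
  have hnuB : ∀ i, B ≤ i → nu i = 0 := fun i hi => hnu.2 i (by omega)
  set Mf : ℕ → ℕ := fun i => max (mu i) (nu i) with hMf
  set mf : ℕ → ℕ := fun i => min (mu i) (nu i) with hmf
  set SA := (range B).filter (fun i => mu i ≤ nu i ∧ (i = 0 ∨ nu i < mu (i - 1))) with hSA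
  set SB := (range B).filter (fun i => mu i ≤ nu i ∧ nu (i + 1) < mu i) with hSB
  set P := ∑ i ∈ range B, (Mf i - mu i) with hP
  set Q := ∑ i ∈ range B, (Mf i - nu i) with hQ
  -- LEFT SIDE
  have hLfin : {lam : ℕ → ℕ | HS lam mu ∧ VS lam nu}.Finite := by
    apply (finite_funs B (nu 0 + 1)).subset
    rintro lam ⟨⟨hs1, hs2⟩, hvs⟩
    constructor
    · intro i
      have := (hvs i).2
      have := hnu.1 (Nat.zero_le i)
      omega
    · intro i hi
      have h1 := hs2 (i - 1)
      have h2 := hmu.2 (i - 1) (by omega)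
      have : lam (i - 1 + 1) = lam i := by congr 1; omega
      omega
  have hLzero : ∀ lam : ℕ → ℕ, (HS lam mu ∧ VS lam nu) → ∀ i, B ≤ i → lam i = 0 := by
    rintro lam ⟨⟨hs1, hs2⟩, hvs⟩ i hi
    have h1 := hs2 (i - 1)
    have h2 := hmu.2 (i - 1) (by omega)
    have : lam (i - 1 + 1) = lam i := by congr 1; omega
    omega
  have hkey1 : ∀ lam : ℕ → ℕ, (HS lam mu ∧ VS lam nu) →
      ∀ i, Mf i ≤ lam i ∧ lam i ≤ Mf i + 1 := by
    rintro lam ⟨⟨hs1, hs2⟩, hvs⟩ i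
    have := hs1 i
    have := (hvs i).1
    have := (hvs i).2
    simp only [hMf]
    omega
  have hkey2 : ∀ lam : ℕ → ℕ, (HS lam mu ∧ VS lam nu) →
      ∀ i, Mf i < lam i → i ∈ SA := by
    rintro lam ⟨⟨hs1, hs2⟩, hvs⟩ i hlt
    simp only [hMf] at hlt
    simp only [hSA, mem_filter, mem_range]
    have hv2 := (hvs i).2
    have hd : mu i ≤ nu i := by omega
    have hiB : i < B := by
      by_contra hcon
      have := hLzero lam ⟨⟨hs1, hs2⟩, hvs⟩ i (by omega)
      omega
    refine ⟨hiB, hd, ?_⟩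
    by_cases hi0 : i = 0
    · left; exact hi0
    · right
      have h1 : lam i ≤ mu (i - 1) := by
        have := hs2 (i - 1)
        have : lam (i - 1 + 1) = lam i := by congr 1; omega
        omega
      omega
  have hLHS : (∑ᶠ lam ∈ {lam : ℕ → ℕ | HS lam mu ∧ VS lam nu},
        x ^ dwt lam mu * y ^ dwt lam nu)
      = x ^ P * y ^ Q * (x * y + 1) ^ SA.card := by
    rw [finsum_mem_eq_finite_toFinset_sum _ hLfin]
    rw [Finset.sum_nbij' (i := fun lam => SA.filter (fun i => Mf i < lam i))
      (j := fun S => (fun i => Mf i + (if i ∈ S then 1 else 0)))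
      (t := SA.powerset)
      (g := fun S => x ^ P * y ^ Q * (x * y) ^ S.card) ?_ ?_ ?_ ?_ ?_]
    · rw [← Finset.mul_sum, sum_powerset_pow]
    · intro lam _
      exact Finset.mem_powerset.2 (Finset.filter_subset _ _)
    · intro S hS
      rw [Finset.mem_powerset] at hS
      rw [Set.Finite.mem_toFinset]
      have hmem : ∀ i ∈ S, (mu i ≤ nu i ∧ (i = 0 ∨ nu i < mu (i - 1))) ∧ i < B := by
        intro i hi
        have := hS hi
        simp only [hSA, mem_filter, mem_range] at this
        exact ⟨⟨this.2.1, this.2.2⟩, this.1⟩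
      constructor
      · constructor
        · intro i
          simp only [hMf]
          omega
        · intro i
          by_cases hiS : i + 1 ∈ S
          · have := (hmem _ hiS).1
            simp only [Nat.add_sub_cancel] at this
            simp only [if_pos hiS]
            simp only [hMf]
            have := hc2 i
            have := hmu.1 (Nat.le_add_right i 1)
            omega
          · simp only [if_neg hiS]
            simp only [hMf]
            have := hc2 i
            have := hmu.1 (Nat.le_add_right i 1)
            omega
      · intro i
        by_cases hiS : i ∈ S
        · have := (hmem _ hiS).1
          simp only [if_pos hiS]
          simp only [hMf]
          omega
        · simp only [if_neg hiS]
          simp only [hMf]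
          have := hc1 i
          omega
    · intro lam hlam
      rw [Set.Finite.mem_toFinset] at hlam
      funext i
      by_cases hlt : Mf i < lam i
      · rw [if_pos (by
          simp only [mem_filter]
          exact ⟨hkey2 lam hlam i hlt, hlt⟩)]
        have := (hkey1 lam hlam i).2
        omega
      · rw [if_neg (by
          simp only [mem_filter]
          rintro ⟨_, h⟩
          exact hlt h)]
        have := (hkey1 lam hlam i).1
        omega
    · intro S hS
      rw [Finset.mem_powerset] at hS
      ext i
      simp only [mem_filter]
      constructor
      · rintro ⟨hiA, hlt⟩
        by_contra hiS
        simp only [if_neg hiS] at hlt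
        omega
      · intro hiS
        refine ⟨hS hiS, ?_⟩
        simp only [if_pos hiS]
        omega
    · intro lam hlam
      rw [Set.Finite.mem_toFinset] at hlam
      have hz := hLzero lam hlam
      have hfilter_iff : ∀ i ∈ range B,
          (if i ∈ SA.filter (fun i => Mf i < lam i) then 1 else 0)
            = lam i - Mf i := by
        intro i _
        by_cases hlt : Mf i < lam i
        · rw [if_pos (by simp only [mem_filter]; exact ⟨hkey2 lam hlam i hlt, hlt⟩)]
          have := (hkey1 lam hlam i).2
          omega
        · rw [if_neg (by simp only [mem_filter]; rintro ⟨_, h⟩; exact hlt h)]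
          have := (hkey1 lam hlam i).1
          omega
      have hd1 : dwt lam mu = P + (SA.filter (fun i => Mf i < lam i)).card := by
        rw [dwt_eq_sum_range B hz, hP]
        rw [← sum_indicator_card (Finset.Subset.trans (Finset.filter_subset _ _)
          (by rw [hSA]; exact Finset.filter_subset _ _))]
        rw [← Finset.sum_add_distrib]
        apply Finset.sum_congr rfl
        intro i hi
        rw [hfilter_iff i hi]
        have h1 := (hkey1 lam hlam i).1
        have h2 := (hkey1 lam hlam i).2
        have : mu i ≤ Mf i := by simp only [hMf]; omega
        omega
      have hd2 : dwt lam nu = Q + (SA.filter (fun i => Mf i < lam i)).card := by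
        rw [dwt_eq_sum_range B hz, hQ]
        rw [← sum_indicator_card (Finset.Subset.trans (Finset.filter_subset _ _)
          (by rw [hSA]; exact Finset.filter_subset _ _))]
        rw [← Finset.sum_add_distrib]
        apply Finset.sum_congr rfl
        intro i hi
        rw [hfilter_iff i hi]
        have h1 := (hkey1 lam hlam i).1
        have h2 := (hkey1 lam hlam i).2
        have : nu i ≤ Mf i := by simp only [hMf]; omega
        omega
      rw [hd1, hd2, pow_add, pow_add, mul_pow]
      ring
  -- RIGHT SIDE
  have hRfin : {rho : ℕ → ℕ | VS mu rho ∧ HS nu rho}.Finite := by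
    apply (finite_funs m (mu 0)).subset
    rintro rho ⟨hvs, ⟨hs1, hs2⟩⟩
    constructor
    · intro i
      have := (hvs i).1
      have := hmu.1 (Nat.zero_le i)
      omega
    · intro i hi
      have := (hvs i).1
      have := hmu.2 i hi
      omega
  have hrkey1 : ∀ rho : ℕ → ℕ, (VS mu rho ∧ HS nu rho) →
      ∀ i, rho i ≤ mf i ∧ mf i ≤ rho i + 1 := by
    rintro rho ⟨hvs, ⟨hs1, hs2⟩⟩ i
    have h1 := (hvs i).1
    have h2 := (hvs i).2
    have h3 := hs1 i
    simp only [hmf]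
    omega
  have hrkey2 : ∀ rho : ℕ → ℕ, (VS mu rho ∧ HS nu rho) →
      ∀ i, rho i < mf i → i ∈ SB := by
    rintro rho ⟨hvs, ⟨hs1, hs2⟩⟩ i hlt
    simp only [hmf] at hlt
    simp only [hSB, mem_filter, mem_range]
    have h1 := (hvs i).1
    have h2 := (hvs i).2
    have h3 := hs1 i
    have h4 := hs2 i
    have hd : mu i ≤ nu i := by omega
    have hiB : i < B := by
      have : 0 < mu i := by omega
      by_contra hcon
      have := hmuB i (by omega)
      omega
    exact ⟨hiB, hd, by omega⟩
  have hRHS : (∑ᶠ rho ∈ {rho : ℕ → ℕ | VS mu rho ∧ HS nu rho},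
        x ^ dwt nu rho * y ^ dwt mu rho)
      = x ^ P * y ^ Q * (x * y + 1) ^ SB.card := by
    rw [finsum_mem_eq_finite_toFinset_sum _ hRfin]
    have hPeq : P = ∑ i ∈ range B, (nu i - mf i) := by
      apply Finset.sum_congr rfl
      intro i _
      simp only [hMf, hmf]
      omega
    have hQeq : Q = ∑ i ∈ range B, (mu i - mf i) := by
      apply Finset.sum_congr rfl
      intro i _
      simp only [hMf, hmf]
      omega
    rw [Finset.sum_nbij' (i := fun rho => SB.filter (fun i => rho i < mf i))
      (j := fun S => (fun i => mf i - (if i ∈ S then 1 else 0)))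
      (t := SB.powerset)
      (g := fun S => x ^ P * y ^ Q * (x * y) ^ S.card) ?_ ?_ ?_ ?_ ?_]
    · rw [← Finset.mul_sum, sum_powerset_pow]
    · intro rho _
      exact Finset.mem_powerset.2 (Finset.filter_subset _ _)
    · intro S hS
      rw [Finset.mem_powerset] at hS
      rw [Set.Finite.mem_toFinset]
      have hmem : ∀ i ∈ S, (mu i ≤ nu i ∧ nu (i + 1) < mu i) ∧ i < B := by
        intro i hi
        have := hS hi
        simp only [hSB, mem_filter, mem_range] at this
        exact ⟨⟨this.2.1, this.2.2⟩, this.1⟩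
      constructor
      · intro i
        by_cases hiS : i ∈ S
        · have := (hmem _ hiS).1
          simp only [if_pos hiS]
          simp only [hmf]
          omega
        · simp only [if_neg hiS]
          simp only [hmf]
          have := hc1 i
          omega
      · constructor
        · intro i
          simp only [hmf]
          omega
        · intro i
          by_cases hiS : i ∈ S
          · have := (hmem _ hiS).1
            simp only [if_pos hiS]
            simp only [hmf]
            omega
          · simp only [if_neg hiS]
            simp only [hmf]
            have := hc2 i
            have := hnu.1 (Nat.le_add_right i 1)
            omega
    · intro rho hrho
      rw [Set.Finite.mem_toFinset] at hrho
      funext i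
      by_cases hlt : rho i < mf i
      · rw [if_pos (by
          simp only [mem_filter]
          exact ⟨hrkey2 rho hrho i hlt, hlt⟩)]
        have := (hrkey1 rho hrho i).2
        omega
      · rw [if_neg (by
          simp only [mem_filter]
          rintro ⟨_, h⟩
          exact hlt h)]
        have := (hrkey1 rho hrho i).1
        omega
    · intro S hS
      rw [Finset.mem_powerset] at hS
      ext i
      simp only [mem_filter]
      constructor
      · rintro ⟨hiB', hlt⟩
        by_contra hiS
        simp only [if_neg hiS] at hlt
        omega
      · intro hiS
        refine ⟨hS hiS, ?_⟩
        simp only [if_pos hiS]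
        have := hS hiS
        simp only [hSB, mem_filter, mem_range] at this
        simp only [hmf]
        omega
    · intro rho hrho
      rw [Set.Finite.mem_toFinset] at hrho
      have hfilter_iff : ∀ i ∈ range B,
          (if i ∈ SB.filter (fun i => rho i < mf i) then 1 else 0)
            = mf i - rho i := by
        intro i _
        by_cases hlt : rho i < mf i
        · rw [if_pos (by simp only [mem_filter]; exact ⟨hrkey2 rho hrho i hlt, hlt⟩)]
          have := (hrkey1 rho hrho i).2
          omega
        · rw [if_neg (by simp only [mem_filter]; rintro ⟨_, h⟩; exact hlt h)]
          have := (hrkey1 rho hrho i).1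
          omega
      have hd1 : dwt nu rho = P + (SB.filter (fun i => rho i < mf i)).card := by
        rw [dwt_eq_sum_range B hnuB, hPeq]
        rw [← sum_indicator_card (Finset.Subset.trans (Finset.filter_subset _ _)
          (by rw [hSB]; exact Finset.filter_subset _ _))]
        rw [← Finset.sum_add_distrib]
        apply Finset.sum_congr rfl
        intro i hi
        rw [hfilter_iff i hi]
        have h1 := (hrkey1 rho hrho i).1
        have h2 := (hrkey1 rho hrho i).2
        have : mf i ≤ nu i := by simp only [hmf]; omega
        omega
      have hd2 : dwt mu rho = Q + (SB.filter (fun i => rho i < mf i)).card := by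
        rw [dwt_eq_sum_range B hmuB, hQeq]
        rw [← sum_indicator_card (Finset.Subset.trans (Finset.filter_subset _ _)
          (by rw [hSB]; exact Finset.filter_subset _ _))]
        rw [← Finset.sum_add_distrib]
        apply Finset.sum_congr rfl
        intro i hi
        rw [hfilter_iff i hi]
        have h1 := (hrkey1 rho hrho i).1
        have h2 := (hrkey1 rho hrho i).2
        have : mf i ≤ mu i := by simp only [hmf]; omega
        omega
      rw [hd1, hd2, pow_add, pow_add, mul_pow]
      ring
  rw [hLHS, hRHS]
  rw [card_SA_eq_card_SB m hmu hnu hc1 hc2, pow_succ]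
  ring

end Commute

/-! ### Dual Pieri rule -/

section Pieri

variable {R : Type*} [CommRing R]

lemma ptn_of_hs {m : ℕ} {mu lam : ℕ → ℕ} (hmu : Ptn m mu) (hhs : HS lam mu) :
    Ptn (m + 1) lam := by
  constructor
  · exact fun i j hij => antitone_nat_of_succ_le
      (fun r => le_trans (hhs.2 r) (hhs.1 r)) hij
  · intro i hi
    have h1 := hhs.2 (i - 1)
    have h2 := hmu.2 (i - 1) (by omega)
    have h3 : lam (i - 1 + 1) = lam i := by congr 1; omega
    omega

lemma schur_conj_zero_wide (K : ℕ) {A : ℕ} {lam : ℕ → ℕ}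
    (hl : Ptn A lam) (h : K < lam 0) (y : ℕ → R) : schur K (conjugate lam) y = 0 :=
  schur_eq_zero_of_tall K y (conj_ptn hl le_rfl).1 (conj_pos hl h)

lemma dwt_zero_left (mu : ℕ → ℕ) : dwt (fun _ => 0) mu = 0 := by
  unfold dwt
  have h : ∀ i : ℕ, (fun _ => 0) i - mu i = (0 : ℕ) := fun i => Nat.zero_sub _
  rw [finsum_congr h, finsum_zero]

lemma sum_sum_filter_comm {α β M : Type*} [AddCommMonoid M] (s : Finset α) (t : Finset β)
    (p : α → β → Prop) [∀ a, DecidablePred (p a)] [∀ b, DecidablePred (fun a => p a b)]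
    (f : α → β → M) :
    (∑ a ∈ s, ∑ b ∈ t.filter (p a), f a b)
      = ∑ b ∈ t, ∑ a ∈ s.filter (fun a => p a b), f a b := by
  simp_rw [Finset.sum_filter]
  exact Finset.sum_comm

/-- Conjugated branching rule. -/
lemma schur_branching_conj (k B : ℕ) {lam : ℕ → ℕ} (hl : Ptn B lam)
    (hk : lam 0 ≤ k + 1) (y : ℕ → R) :
    schur (k + 1) (conjugate lam) y
      = ∑ᶠ nu ∈ {nu : ℕ → ℕ | Ptn B nu ∧ VS lam nu},
          schur k (conjugate nu) y * y (k + 1) ^ dwt lam nu := by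
  classical
  have hcl : Ptn (k + 1) (conjugate lam) := conj_ptn hl hk
  rw [schur_branching k hcl y]
  have hS1fin : {sig : ℕ → ℕ | Ptn k sig ∧ HS (conjugate lam) sig}.Finite := by
    apply (finite_funs k (conjugate lam 0)).subset
    rintro sig ⟨hp, hhs⟩
    exact ⟨fun j => le_trans (hhs.1 j) (hcl.1 (Nat.zero_le j)), hp.2⟩
  have hS2fin : {nu : ℕ → ℕ | (Ptn B nu ∧ VS lam nu) ∧ nu 0 ≤ k}.Finite := by
    apply (finite_funs B (lam 0)).subset
    rintro nu ⟨⟨hp, hvs⟩, _⟩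
    exact ⟨fun i => le_trans ((hvs i).1) (hl.1 (Nat.zero_le i)), hp.2⟩
  have hS2fin' : {nu : ℕ → ℕ | Ptn B nu ∧ VS lam nu}.Finite := by
    apply (finite_funs B (lam 0)).subset
    rintro nu ⟨hp, hvs⟩
    exact ⟨fun i => le_trans ((hvs i).1) (hl.1 (Nat.zero_le i)), hp.2⟩
  rw [finsum_mem_eq_finite_toFinset_sum _ hS1fin,
    finsum_mem_eq_finite_toFinset_sum _ hS2fin']
  have hsub : hS2fin.toFinset ⊆ hS2fin'.toFinset := by
    intro nu hnu
    rw [Set.Finite.mem_toFinset] at hnu ⊢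
    exact hnu.1
  rw [← Finset.sum_subset hsub (fun nu hnu hnu' => ?_)]
  · -- bijection between S1 and S2 ∩ {nu 0 ≤ k}
    refine Finset.sum_nbij' (i := fun sig => conjugate sig) (j := fun nu => conjugate nu)
      ?_ ?_ ?_ ?_ ?_
    · intro sig hsig
      rw [Set.Finite.mem_toFinset] at hsig ⊢
      obtain ⟨hp, hhs⟩ := hsig
      have h0 : sig 0 ≤ B := le_trans (hhs.1 0) (conj_le hl 0)
      have hnup : Ptn B (conjugate sig) := conj_ptn hp h0
      refine ⟨⟨hnup, ?_⟩, conj_le hp 0⟩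
      rw [← hs_conj_iff_vs hl hnup]
      rwa [conj_conj hp]
    · intro nu hnu
      rw [Set.Finite.mem_toFinset] at hnu ⊢
      obtain ⟨⟨hp, hvs⟩, h0⟩ := hnu
      refine ⟨conj_ptn hp h0, ?_⟩
      show HS (conjugate lam) (conjugate nu)
      exact (hs_conj_iff_vs hl hp).2 hvs
    · intro sig hsig
      rw [Set.Finite.mem_toFinset] at hsig
      exact conj_conj hsig.1
    · intro nu hnu
      rw [Set.Finite.mem_toFinset] at hnu
      exact conj_conj hnu.1.1
    · intro sig hsig
      rw [Set.Finite.mem_toFinset] at hsig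
      obtain ⟨hp, hhs⟩ := hsig
      have h0 : sig 0 ≤ B := le_trans (hhs.1 0) (conj_le hl 0)
      have hnup : Ptn B (conjugate sig) := conj_ptn hp h0
      have hvs : VS lam (conjugate sig) := by
        rw [← hs_conj_iff_vs hl hnup]
        rwa [conj_conj hp]
      congr 1
      · rw [conj_conj hp]
      · rw [← dwt_conj hl hnup (fun i => (hvs i).1) hk, conj_conj hp]
  · -- terms with nu 0 = k + 1 vanish
    rw [Set.Finite.mem_toFinset] at hnu
    rw [Set.Finite.mem_toFinset] at hnu'
    have h0 : k < nu 0 := by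
      by_contra h
      exact hnu' ⟨hnu, by omega⟩
    rw [schur_conj_zero_wide k hnu.1 h0 y, zero_mul]

/-- The dual Pieri rule. -/
lemma dual_pieri (k : ℕ) {m : ℕ} {mu : ℕ → ℕ} (hmu : Ptn m mu) (x : R) (y : ℕ → R) :
    (∑ᶠ lam ∈ {lam : ℕ → ℕ | HS lam mu},
        x ^ dwt lam mu * schur k (conjugate lam) y)
      = (∏ j ∈ Icc 1 k, (1 + x * y j)) * schur k (conjugate mu) y := by
  induction k generalizing mu with
  | zero =>
    simp only [Finset.Icc_self, Icc_eq_empty_of_lt (by omega : (1:ℕ) > 0), Finset.prod_empty,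
      one_mul]
    by_cases hmu0 : mu 0 = 0
    · have hmuz : mu = fun _ => 0 := by
        funext i
        have := hmu.1 (Nat.zero_le i)
        omega
      subst hmuz
      rw [conj_zero_fn, schur_zero_shape]
      · have hsupp : {lam : ℕ → ℕ | HS lam (fun _ => 0)} ∩
            Function.support (fun lam => x ^ dwt lam (fun _ => 0) * schur 0 (conjugate lam) y)
            = ↑({(fun _ => (0:ℕ))} : Finset (ℕ → ℕ)) ∩
              Function.support (fun lam => x ^ dwt lam (fun _ => 0) * schur 0 (conjugate lam) y) := by
          ext lam
          simp only [Set.mem_inter_iff, Set.mem_setOf_eq, Function.mem_support, coe_singleton,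
            Set.mem_singleton_iff]
          constructor
          · rintro ⟨hhs, hne⟩
            refine ⟨?_, hne⟩
            have hptn : Ptn 1 lam := ptn_of_hs ⟨fun i j _ => le_refl 0, fun _ _ => rfl⟩ hhs
            by_cases h0 : lam 0 = 0
            · funext i
              have := hptn.1 (Nat.zero_le i)
              omega
            · exfalso
              rw [schur_conj_zero_wide 0 hptn (by omega) y, mul_zero] at hne
              exact hne rfl
          · rintro ⟨rfl, hne⟩
            exact ⟨⟨fun i => le_refl 0, fun i => le_refl 0⟩, hne⟩
        rw [finsum_mem_eq_sum_of_inter_support_eq _ hsupp, Finset.sum_singleton,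
          dwt_zero_left, pow_zero, one_mul, conj_zero_fn, schur_zero_shape 0 y (fun _ => rfl)]
      · exact fun _ => rfl
    · rw [schur_conj_zero_wide 0 hmu (by omega) y]
      apply finsum_mem_of_eqOn_zero
      intro lam hlam
      show x ^ dwt lam mu * schur 0 (conjugate lam) y = 0
      have hptn : Ptn (m + 1) lam := ptn_of_hs hmu hlam
      have : 0 < lam 0 := by
        have := hlam.1 0
        omega
      rw [schur_conj_zero_wide 0 hptn this y, mul_zero]
  | succ k ih =>
    classical
    have hmuB : Ptn (m + 1) mu := ⟨hmu.1, fun i hi => hmu.2 i (by omega)⟩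
    have hLfin : {lam : ℕ → ℕ | HS lam mu ∧ lam 0 ≤ k + 1}.Finite := by
      apply (finite_funs (m + 1) (k + 1)).subset
      rintro lam ⟨hhs, hl0⟩
      have hptn := ptn_of_hs hmu hhs
      exact ⟨fun i => le_trans (hptn.1 (Nat.zero_le i)) hl0, hptn.2⟩
    have hUfin : {nu : ℕ → ℕ | Ptn (m + 1) nu ∧ nu 0 ≤ k + 1}.Finite := by
      apply (finite_funs (m + 1) (k + 1)).subset
      rintro nu ⟨hptn, h0⟩
      exact ⟨fun i => le_trans (hptn.1 (Nat.zero_le i)) h0, hptn.2⟩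
    have hRfin : {rho : ℕ → ℕ | Ptn m rho ∧ VS mu rho}.Finite := by
      apply (finite_funs m (mu 0)).subset
      rintro rho ⟨hptn, hvs⟩
      exact ⟨fun i => le_trans ((hvs i).1) (hmu.1 (Nat.zero_le i)), hptn.2⟩
    have hstep1 : (∑ᶠ lam ∈ {lam : ℕ → ℕ | HS lam mu},
          x ^ dwt lam mu * schur (k + 1) (conjugate lam) y)
        = ∑ lam ∈ hLfin.toFinset, x ^ dwt lam mu * schur (k + 1) (conjugate lam) y := by
      apply finsum_mem_eq_sum_of_inter_support_eq
      ext lam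
      simp only [Set.mem_inter_iff, Set.mem_setOf_eq, Function.mem_support, mem_coe,
        Set.Finite.mem_toFinset]
      constructor
      · rintro ⟨hhs, hne⟩
        refine ⟨⟨hhs, ?_⟩, hne⟩
        by_contra hgt
        push_neg at hgt
        rw [schur_conj_zero_wide (k + 1) (ptn_of_hs hmu hhs) (by omega) y, mul_zero] at hne
        exact hne rfl
      · rintro ⟨⟨hhs, _⟩, hne⟩
        exact ⟨hhs, hne⟩
    have hstep2 : ∀ lam ∈ hLfin.toFinset, schur (k + 1) (conjugate lam) y
        = ∑ nu ∈ hUfin.toFinset.filter (fun nu => VS lam nu),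
            schur k (conjugate nu) y * y (k + 1) ^ dwt lam nu := by
      intro lam hlam
      rw [Set.Finite.mem_toFinset] at hlam
      have hptn : Ptn (m + 1) lam := ptn_of_hs hmu hlam.1
      rw [schur_branching_conj k (m + 1) hptn hlam.2 y]
      have hseteq : {nu : ℕ → ℕ | Ptn (m + 1) nu ∧ VS lam nu}
          = ↑(hUfin.toFinset.filter (fun nu => VS lam nu)) := by
        ext nu
        simp only [Set.mem_setOf_eq, coe_filter, Set.Finite.mem_toFinset, Set.mem_setOf_eq]
        constructor
        · rintro ⟨h1, h2⟩
          exact ⟨⟨h1, le_trans ((h2 0).1) (le_trans (hptn.1 (Nat.zero_le 0)) hlam.2)⟩, h2⟩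
        · rintro ⟨⟨h1, _⟩, h2⟩
          exact ⟨h1, h2⟩
      rw [hseteq, finsum_mem_coe_finset]
    have hstep4 : ∀ nu ∈ hUfin.toFinset,
        (∑ lam ∈ hLfin.toFinset.filter (fun lam => VS lam nu),
            x ^ dwt lam mu * (schur k (conjugate nu) y * y (k + 1) ^ dwt lam nu))
        = schur k (conjugate nu) y * ((1 + x * y (k + 1)) *
            ∑ rho ∈ hRfin.toFinset.filter (fun rho => HS nu rho),
              x ^ dwt nu rho * y (k + 1) ^ dwt mu rho) := by
      intro nu hnu
      rw [Set.Finite.mem_toFinset] at hnu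
      by_cases hn0 : nu 0 ≤ k
      · have hcomm := commutation (m + 1) hmuB hnu.1 x (y (k + 1))
        have hLset : {lam : ℕ → ℕ | HS lam mu ∧ VS lam nu}
            = ↑(hLfin.toFinset.filter (fun lam => VS lam nu)) := by
          ext lam
          simp only [Set.mem_setOf_eq, coe_filter, Set.Finite.mem_toFinset, Set.mem_setOf_eq]
          constructor
          · rintro ⟨h1, h2⟩
            have : lam 0 ≤ nu 0 + 1 := (h2 0).2
            exact ⟨⟨h1, by omega⟩, h2⟩
          · rintro ⟨⟨h1, _⟩, h2⟩
            exact ⟨h1, h2⟩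
        have hRset : {rho : ℕ → ℕ | VS mu rho ∧ HS nu rho}
            = ↑(hRfin.toFinset.filter (fun rho => HS nu rho)) := by
          ext rho
          simp only [Set.mem_setOf_eq, coe_filter, Set.Finite.mem_toFinset, Set.mem_setOf_eq]
          constructor
          · rintro ⟨h1, h2⟩
            refine ⟨⟨⟨fun i j hij => antitone_nat_of_succ_le
              (fun r => le_trans (h2.1 (r + 1)) (h2.2 r)) hij, ?_⟩, h1⟩, h2⟩
            intro i hi
            have := (h1 i).1
            have := hmu.2 i hi
            omega
          · rintro ⟨⟨_, h1⟩, h2⟩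
            exact ⟨h1, h2⟩
        rw [hLset, finsum_mem_coe_finset, hRset, finsum_mem_coe_finset] at hcomm
        calc (∑ lam ∈ hLfin.toFinset.filter (fun lam => VS lam nu),
              x ^ dwt lam mu * (schur k (conjugate nu) y * y (k + 1) ^ dwt lam nu))
            = schur k (conjugate nu) y *
              ∑ lam ∈ hLfin.toFinset.filter (fun lam => VS lam nu),
                x ^ dwt lam mu * y (k + 1) ^ dwt lam nu := by
              rw [Finset.mul_sum]
              apply Finset.sum_congr rfl
              intro lam _
              ring
          _ = _ := by rw [hcomm]
      · have hz : schur k (conjugate nu) y = 0 :=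
          schur_conj_zero_wide k hnu.1 (by omega) y
        rw [hz]
        simp
    have hstep6 : ∀ rho ∈ hRfin.toFinset,
        (∑ nu ∈ hUfin.toFinset.filter (fun nu => HS nu rho),
            x ^ dwt nu rho * schur k (conjugate nu) y)
        = (∏ j ∈ Icc 1 k, (1 + x * y j)) * schur k (conjugate rho) y := by
      intro rho hrho
      rw [Set.Finite.mem_toFinset] at hrho
      rw [← ih hrho.1]
      symm
      apply finsum_mem_eq_sum_of_inter_support_eq
      ext nu
      simp only [Set.mem_inter_iff, Set.mem_setOf_eq, Function.mem_support, mem_coe,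
        coe_filter, Set.Finite.mem_toFinset, Set.mem_setOf_eq]
      constructor
      · rintro ⟨hhs, hne⟩
        have hptn : Ptn (m + 1) nu := ptn_of_hs hrho.1 hhs
        refine ⟨⟨⟨hptn, ?_⟩, hhs⟩, hne⟩
        by_contra hgt
        push_neg at hgt
        rw [schur_conj_zero_wide k hptn (by omega) y, mul_zero] at hne
        exact hne rfl
      · rintro ⟨⟨_, hhs⟩, hne⟩
        exact ⟨hhs, hne⟩
    have hstep7 : (∑ rho ∈ hRfin.toFinset,
          y (k + 1) ^ dwt mu rho * schur k (conjugate rho) y)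
        = schur (k + 1) (conjugate mu) y := by
      by_cases hm0 : mu 0 ≤ k + 1
      · rw [schur_branching_conj k (m + 1) hmuB hm0 y]
        have hset : {rho : ℕ → ℕ | Ptn (m + 1) rho ∧ VS mu rho} = ↑hRfin.toFinset := by
          ext rho
          simp only [Set.mem_setOf_eq, Set.Finite.coe_toFinset, Set.mem_setOf_eq]
          constructor
          · rintro ⟨h1, h2⟩
            refine ⟨⟨h1.1, fun i hi => ?_⟩, h2⟩
            have := (h2 i).1
            have := hmu.2 i hi
            omega
          · rintro ⟨h1, h2⟩
            exact ⟨⟨h1.1, fun i hi => h1.2 i (by omega)⟩, h2⟩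
        rw [hset, finsum_mem_coe_finset]
        apply Finset.sum_congr rfl
        intro rho _
        ring
      · rw [schur_conj_zero_wide (k + 1) hmu (by omega) y]
        apply Finset.sum_eq_zero
        intro rho hrho
        rw [Set.Finite.mem_toFinset] at hrho
        have hlt : k < rho 0 := by
          have := (hrho.2 0).2
          omega
        rw [schur_conj_zero_wide k hrho.1 hlt y, mul_zero]
    -- assemble
    calc (∑ᶠ lam ∈ {lam : ℕ → ℕ | HS lam mu},
          x ^ dwt lam mu * schur (k + 1) (conjugate lam) y)
        = ∑ lam ∈ hLfin.toFinset, x ^ dwt lam mu * schur (k + 1) (conjugate lam) y := hstep1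
      _ = ∑ lam ∈ hLfin.toFinset, ∑ nu ∈ hUfin.toFinset.filter (fun nu => VS lam nu),
            x ^ dwt lam mu * (schur k (conjugate nu) y * y (k + 1) ^ dwt lam nu) := by
          apply Finset.sum_congr rfl
          intro lam hlam
          rw [hstep2 lam hlam, Finset.mul_sum]
      _ = ∑ nu ∈ hUfin.toFinset, ∑ lam ∈ hLfin.toFinset.filter (fun lam => VS lam nu),
            x ^ dwt lam mu * (schur k (conjugate nu) y * y (k + 1) ^ dwt lam nu) :=
          sum_sum_filter_comm _ _ _ _
      _ = ∑ nu ∈ hUfin.toFinset, schur k (conjugate nu) y * ((1 + x * y (k + 1)) *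
            ∑ rho ∈ hRfin.toFinset.filter (fun rho => HS nu rho),
              x ^ dwt nu rho * y (k + 1) ^ dwt mu rho) :=
          Finset.sum_congr rfl hstep4
      _ = (1 + x * y (k + 1)) * ∑ nu ∈ hUfin.toFinset,
            ∑ rho ∈ hRfin.toFinset.filter (fun rho => HS nu rho),
              schur k (conjugate nu) y * (x ^ dwt nu rho * y (k + 1) ^ dwt mu rho) := by
          rw [Finset.mul_sum]
          apply Finset.sum_congr rfl
          intro nu _
          rw [← Finset.mul_sum]
          ring
      _ = (1 + x * y (k + 1)) * ∑ rho ∈ hRfin.toFinset,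
            ∑ nu ∈ hUfin.toFinset.filter (fun nu => HS nu rho),
              schur k (conjugate nu) y * (x ^ dwt nu rho * y (k + 1) ^ dwt mu rho) := by
          rw [sum_sum_filter_comm _ _ _ _]
      _ = (1 + x * y (k + 1)) * ∑ rho ∈ hRfin.toFinset,
            y (k + 1) ^ dwt mu rho *
              ∑ nu ∈ hUfin.toFinset.filter (fun nu => HS nu rho),
                x ^ dwt nu rho * schur k (conjugate nu) y := by
          congr 1
          apply Finset.sum_congr rfl
          intro rho _
          rw [Finset.mul_sum]
          apply Finset.sum_congr rfl
          intro nu _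
          ring
      _ = (1 + x * y (k + 1)) * ∑ rho ∈ hRfin.toFinset,
            y (k + 1) ^ dwt mu rho *
              ((∏ j ∈ Icc 1 k, (1 + x * y j)) * schur k (conjugate rho) y) := by
          congr 1
          apply Finset.sum_congr rfl
          intro rho hrho
          rw [hstep6 rho hrho]
      _ = ((1 + x * y (k + 1)) * ∏ j ∈ Icc 1 k, (1 + x * y j)) *
            ∑ rho ∈ hRfin.toFinset,
              y (k + 1) ^ dwt mu rho * schur k (conjugate rho) y := by
          rw [mul_assoc]
          congr 1
          rw [Finset.mul_sum]
          apply Finset.sum_congr rfl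
          intro rho _
          ring
      _ = (∏ j ∈ Icc 1 (k + 1), (1 + x * y j)) * schur (k + 1) (conjugate mu) y := by
          rw [hstep7, Finset.prod_Icc_succ_top (by omega : 1 ≤ k + 1)]
          ring

end Pieri

/-! ### The dual Cauchy identity -/

section Main

variable {R : Type*} [CommRing R]

lemma cauchy_aux (k : ℕ) (x y : ℕ → R) (n : ℕ) :
    (∑ᶠ lam ∈ {lam : ℕ → ℕ | IsPartitionIn n k lam},
        schur n lam x * schur k (conjugate lam) y)
      = ∏ i ∈ Icc 1 n, ∏ j ∈ Icc 1 k, (1 + x i * y j) := by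
  induction n with
  | zero =>
    have hset : {lam : ℕ → ℕ | IsPartitionIn 0 k lam} = {fun _ => 0} := by
      ext lam
      simp only [Set.mem_setOf_eq, Set.mem_singleton_iff]
      constructor
      · intro h
        funext i
        exact h.2.1 i (Nat.zero_le i)
      · rintro rfl
        exact ⟨fun i j _ => le_refl 0, fun i _ => rfl, Nat.zero_le k⟩
    rw [hset, finsum_mem_singleton, schur_zero_shape 0 x (fun _ => rfl), conj_zero_fn,
      schur_zero_shape k y (fun _ => rfl)]
    simp
  | succ n ihn =>
    classical
    have hPfin : {lam : ℕ → ℕ | IsPartitionIn (n + 1) k lam}.Finite := by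
      apply (finite_funs (n + 1) k).subset
      rintro lam ⟨h1, h2, h3⟩
      exact ⟨fun i => le_trans (h1 (Nat.zero_le i)) h3, h2⟩
    have hMfin : {mu : ℕ → ℕ | Ptn n mu ∧ mu 0 ≤ k}.Finite := by
      apply (finite_funs n k).subset
      rintro mu ⟨h1, h2⟩
      exact ⟨fun i => le_trans (h1.1 (Nat.zero_le i)) h2, h1.2⟩
    rw [finsum_mem_eq_finite_toFinset_sum _ hPfin]
    have hbr : ∀ lam ∈ hPfin.toFinset, schur (n + 1) lam x
        = ∑ mu ∈ hMfin.toFinset.filter (fun mu => HS lam mu),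
            schur n mu x * x (n + 1) ^ dwt lam mu := by
      intro lam hlam
      rw [Set.Finite.mem_toFinset] at hlam
      rw [schur_branching n ⟨hlam.1, hlam.2.1⟩ x]
      have hset : {mu : ℕ → ℕ | Ptn n mu ∧ HS lam mu}
          = ↑(hMfin.toFinset.filter (fun mu => HS lam mu)) := by
        ext mu
        simp only [Set.mem_setOf_eq, coe_filter, Set.Finite.mem_toFinset, Set.mem_setOf_eq]
        constructor
        · rintro ⟨h1, h2⟩
          exact ⟨⟨h1, le_trans (h2.1 0) (le_trans (hlam.1 (Nat.zero_le 0)) hlam.2.2)⟩, h2⟩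
        · rintro ⟨⟨h1, _⟩, h2⟩
          exact ⟨h1, h2⟩
      rw [hset, finsum_mem_coe_finset]
    calc ∑ lam ∈ hPfin.toFinset, schur (n + 1) lam x * schur k (conjugate lam) y
        = ∑ lam ∈ hPfin.toFinset, ∑ mu ∈ hMfin.toFinset.filter (fun mu => HS lam mu),
            schur n mu x * x (n + 1) ^ dwt lam mu * schur k (conjugate lam) y := by
          apply Finset.sum_congr rfl
          intro lam hlam
          rw [hbr lam hlam, Finset.sum_mul]
      _ = ∑ mu ∈ hMfin.toFinset, ∑ lam ∈ hPfin.toFinset.filter (fun lam => HS lam mu),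
            schur n mu x * x (n + 1) ^ dwt lam mu * schur k (conjugate lam) y :=
          sum_sum_filter_comm _ _ _ _
      _ = ∑ mu ∈ hMfin.toFinset, schur n mu x *
            ((∏ j ∈ Icc 1 k, (1 + x (n + 1) * y j)) * schur k (conjugate mu) y) := by
          apply Finset.sum_congr rfl
          intro mu hmu
          rw [Set.Finite.mem_toFinset] at hmu
          have hpier := dual_pieri k hmu.1 (x (n + 1)) y
          have hsupp : {lam : ℕ → ℕ | HS lam mu} ∩ Function.support
              (fun lam => x (n + 1) ^ dwt lam mu * schur k (conjugate lam) y)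
              = ↑(hPfin.toFinset.filter (fun lam => HS lam mu)) ∩ Function.support
              (fun lam => x (n + 1) ^ dwt lam mu * schur k (conjugate lam) y) := by
            ext lam
            simp only [Set.mem_inter_iff, Set.mem_setOf_eq, Function.mem_support, mem_coe,
              coe_filter, Set.Finite.mem_toFinset, Set.mem_setOf_eq]
            constructor
            · rintro ⟨hhs, hne⟩
              have hptn : Ptn (n + 1) lam := ptn_of_hs hmu.1 hhs
              refine ⟨⟨⟨hptn.1, hptn.2, ?_⟩, hhs⟩, hne⟩
              by_contra hgt
              push_neg at hgt
              rw [schur_conj_zero_wide k hptn (by omega) y, mul_zero] at hne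
              exact hne rfl
            · rintro ⟨⟨_, hhs⟩, hne⟩
              exact ⟨hhs, hne⟩
          rw [finsum_mem_eq_sum_of_inter_support_eq _ hsupp] at hpier
          rw [← hpier, Finset.mul_sum]
          apply Finset.sum_congr rfl
          intro lam _
          ring
      _ = (∏ j ∈ Icc 1 k, (1 + x (n + 1) * y j)) *
            ∑ mu ∈ hMfin.toFinset, schur n mu x * schur k (conjugate mu) y := by
          rw [Finset.mul_sum]
          apply Finset.sum_congr rfl
          intro mu _
          ring
      _ = ∏ i ∈ Icc 1 (n + 1), ∏ j ∈ Icc 1 k, (1 + x i * y j) := by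
          have hset : {lam : ℕ → ℕ | IsPartitionIn n k lam} = ↑hMfin.toFinset := by
            ext mu
            simp only [Set.mem_setOf_eq, Set.Finite.coe_toFinset, Set.mem_setOf_eq]
            constructor
            · rintro ⟨h1, h2, h3⟩
              exact ⟨⟨h1, h2⟩, h3⟩
            · rintro ⟨⟨h1, h2⟩, h3⟩
              exact ⟨h1, h2, h3⟩
          have hihn := ihn
          rw [hset, finsum_mem_coe_finset] at hihn
          rw [hihn, Finset.prod_Icc_succ_top (by omega : 1 ≤ n + 1)]
          ring

end Main



/-- **Dual Cauchy identity**: for positive integers `n, k` and elements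
`x₁, …, x_n, y₁, …, y_k` of a commutative ring,
`∑_{λ ⊆ n × k} s_λ(x) · s_{λ'}(y) = ∏_{i=1}^n ∏_{j=1}^k (1 + x_i y_j)`,
the sum running over all partitions contained in the `n × k` rectangle. -/
theorem dual_cauchy_identity {R : Type*} [CommRing R] (n k : ℕ) (hn : 0 < n) (hk : 0 < k)
    (x y : ℕ → R) :
    (∑ᶠ lam ∈ {lam : ℕ → ℕ | IsPartitionIn n k lam},
        schur n lam x * schur k (conjugate lam) y) =
      ∏ i ∈ Finset.Icc 1 n, ∏ j ∈ Finset.Icc 1 k, (1 + x i * y j) := by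
  exact cauchy_aux k x y n
end

section
/- Double factorial identities (Proposition): for all natural numbers i > j ≥ 0 the following hold in ℚ. (a) If i is odd and j is even, then Σ_{ℓ=0}^{j/2} ( (2ℓ + i − j − 2)!! · j!! · (i − j) ) / (2ℓ)!! = i!!. (b) If i is even and j is odd, then Σ_{ℓ=0}^{(j−1)/2} ( (2ℓ + i − j − 2)!! · (j−1)!! · (i − j) ) / (2ℓ)!! = (i−1)!!. (In each summand the argument 2ℓ + i − j − 2 is ≥ −1, using the convention (−1)!! = 1.) -/
/-- The double factorial `n!! = n(n-2)(n-4)⋯`, with `0!! = 1!! = 1`. -/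
def dfact : ℕ → ℕ
  | 0 => 1
  | 1 => 1
  | (n + 2) => (n + 2) * dfact n

/-- The double factorial extended to integers `n ≥ -1` by the convention `(-1)!! = 1`
(via `Int.toNat`, so `dfactZ n = (n.toNat)!!` and `dfactZ (-1) = 1`). -/
def dfactZ (n : ℤ) : ℕ := dfact n.toNat

lemma dfactZ_natCast (n : ℕ) : dfactZ (n : ℤ) = dfact n := rfl

lemma dfact_pos : ∀ n, 0 < dfact n
  | 0 => by simp [dfact]
  | 1 => by simp [dfact]
  | (n+2) => by
      have := dfact_pos n
      simp only [dfact]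
      positivity

lemma key (m : ℕ) (hm : Odd m) : ∀ k : ℕ,
    ∑ l ∈ Finset.range (k + 1),
      (dfactZ (2 * (l : ℤ) + (m : ℤ) - 2) : ℚ) * m / (dfact (2 * l) : ℚ)
      = (dfact (2 * k + m) : ℚ) / (dfact (2 * k) : ℚ)
  | 0 => by
    simp only [zero_add, Finset.sum_range_one]
    rcases m with _ | _ | m
    · exact absurd hm (by simp)
    · norm_num
      rfl
    · have h : (2 * ((0:ℕ) : ℤ) + ((m+2 : ℕ) : ℤ) - 2) = ((m : ℕ) : ℤ) := by push_cast; ring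
      rw [h, dfactZ_natCast]
      have : 2 * 0 + (m + 2) = m + 2 := by ring
      rw [this]
      have hd : (dfact (m+2) : ℚ) = ((m:ℚ) + 2) * dfact m := by
        simp only [dfact]; push_cast; ring
      rw [hd]
      simp [dfact]
      ring
  | (k+1) => by
    rw [Finset.sum_range_succ, key m hm k]
    have h : (2 * ((k+1 : ℕ) : ℤ) + (m : ℤ) - 2) = ((2*k + m : ℕ) : ℤ) := by push_cast; ring
    rw [h, dfactZ_natCast]
    have e2 : 2 * (k+1) = (2*k) + 2 := by ring
    have e3 : (2*k) + 2 + m = (2*k + m) + 2 := by omega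
    rw [e2, e3]
    have d2 : (dfact ((2*k) + 2) : ℚ) = (2*(k:ℚ) + 2) * dfact (2*k) := by
      simp only [dfact]; push_cast; ring
    have d3 : (dfact ((2*k + m) + 2) : ℚ) = (2*(k:ℚ) + (m:ℚ) + 2) * dfact (2*k + m) := by
      simp only [dfact]; push_cast; ring
    rw [d2, d3]
    have ha : (dfact (2*k) : ℚ) ≠ 0 := by exact_mod_cast (dfact_pos _).ne'
    have hb : (2*(k:ℚ) + 2) ≠ 0 := by positivity
    field_simp
    ring

lemma main_aux (k m : ℕ) (hm : Odd m) :
    ∑ l ∈ Finset.range (k + 1),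
      ((dfactZ (2 * (l : ℤ) + (m : ℤ) - 2) : ℚ) * (dfact (2*k) : ℚ) * (m : ℚ)) / (dfact (2 * l) : ℚ)
      = (dfact (2 * k + m) : ℚ) := by
  have h : ∀ l ∈ Finset.range (k+1),
      ((dfactZ (2 * (l : ℤ) + (m : ℤ) - 2) : ℚ) * (dfact (2*k) : ℚ) * (m : ℚ)) / (dfact (2 * l) : ℚ)
      = (dfact (2*k) : ℚ) * ((dfactZ (2 * (l : ℤ) + (m : ℤ) - 2) : ℚ) * m / (dfact (2 * l) : ℚ)) := by
    intro l _; ring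
  rw [Finset.sum_congr rfl h, ← Finset.mul_sum, key m hm k]
  have ha : (dfact (2*k) : ℚ) ≠ 0 := by exact_mod_cast (dfact_pos _).ne'
  field_simp

/-- **Double factorial identities** (Proposition): for `i > j ≥ 0`,
(a) if `i` is odd and `j` is even then
`Σ_{ℓ=0}^{j/2} (2ℓ+i-j-2)!!·j!!·(i-j)/(2ℓ)!! = i!!`, and
(b) if `i` is even and `j` is odd then
`Σ_{ℓ=0}^{(j-1)/2} (2ℓ+i-j-2)!!·(j-1)!!·(i-j)/(2ℓ)!! = (i-1)!!`. -/
theorem double_factorial_identities (i j : ℕ) (hij : j < i) :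
    (Odd i → Even j →
      ∑ l ∈ Finset.range (j / 2 + 1),
        ((dfactZ (2 * (l : ℤ) + (i : ℤ) - (j : ℤ) - 2) : ℚ) * (dfact j : ℚ) *
            ((i : ℚ) - (j : ℚ))) / (dfact (2 * l) : ℚ) = (dfact i : ℚ)) ∧
    (Even i → Odd j →
      ∑ l ∈ Finset.range ((j - 1) / 2 + 1),
        ((dfactZ (2 * (l : ℤ) + (i : ℤ) - (j : ℤ) - 2) : ℚ) * (dfact (j - 1) : ℚ) *
            ((i : ℚ) - (j : ℚ))) / (dfact (2 * l) : ℚ) = (dfact (i - 1) : ℚ)) := by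
  have hcast : (i : ℚ) - (j : ℚ) = ((i - j : ℕ) : ℚ) := by
    rw [Nat.cast_sub hij.le]
  have harg : ∀ l : ℕ, (2 * (l : ℤ) + (i : ℤ) - (j : ℤ) - 2) =
      (2 * (l : ℤ) + ((i - j : ℕ) : ℤ) - 2) := by
    intro l; omega
  constructor
  · intro hi hj
    obtain ⟨k, hk⟩ := hj
    set m := i - j with hm
    have hk2 : j = 2 * k := by omega
    have him : i = 2 * k + m := by omega
    have hmodd : Odd m := by
      rcases hi with ⟨a, ha⟩; exact ⟨a - k, by omega⟩
    have hdiv : j / 2 = k := by omega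
    calc ∑ l ∈ Finset.range (j / 2 + 1),
          ((dfactZ (2 * (l : ℤ) + (i : ℤ) - (j : ℤ) - 2) : ℚ) * (dfact j : ℚ) *
            ((i : ℚ) - (j : ℚ))) / (dfact (2 * l) : ℚ)
        = ∑ l ∈ Finset.range (k + 1),
          ((dfactZ (2 * (l : ℤ) + (m : ℤ) - 2) : ℚ) * (dfact (2*k) : ℚ) * (m : ℚ)) /
            (dfact (2 * l) : ℚ) := by
          rw [hdiv]
          refine Finset.sum_congr rfl fun l _ => ?_
          rw [harg l, hcast, hk2]
      _ = (dfact (2 * k + m) : ℚ) := main_aux k m hmodd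
      _ = (dfact i : ℚ) := by rw [← him]
  · intro hi hj
    have hj1 : 1 ≤ j := hj.pos
    obtain ⟨k, hk⟩ : ∃ k, j - 1 = 2 * k := by
      rcases hj with ⟨a, ha⟩; exact ⟨a, by omega⟩
    set m := i - j with hm
    have him : i - 1 = 2 * k + m := by omega
    have hmodd : Odd m := by
      rcases hi with ⟨a, ha⟩
      rcases hj with ⟨b, hb⟩
      exact ⟨a - b - 1, by omega⟩
    have hdiv : (j - 1) / 2 = k := by omega
    calc ∑ l ∈ Finset.range ((j - 1) / 2 + 1),
          ((dfactZ (2 * (l : ℤ) + (i : ℤ) - (j : ℤ) - 2) : ℚ) * (dfact (j - 1) : ℚ) *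
            ((i : ℚ) - (j : ℚ))) / (dfact (2 * l) : ℚ)
        = ∑ l ∈ Finset.range (k + 1),
          ((dfactZ (2 * (l : ℤ) + (m : ℤ) - 2) : ℚ) * (dfact (2*k) : ℚ) * (m : ℚ)) /
            (dfact (2 * l) : ℚ) := by
          rw [hdiv]
          refine Finset.sum_congr rfl fun l _ => ?_
          rw [harg l, hcast, hk]
      _ = (dfact (2 * k + m) : ℚ) := main_aux k m hmodd
      _ = (dfact (i - 1) : ℚ) := by rw [← him]
end

section
/- Contour integral representation of Hermite polynomials: for every natural number l, every s ∈ ℂ and every radius r > 0, He_l(s) = (l!/(2πi)) · ∮_{|ν|=r} e^{νs − ν²/2} · ν^{−l−1} dν, the integral taken counterclockwise over the circle of radius r centered at 0. -/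
/-- The probabilist's Hermite polynomials over `ℂ`: `He₀ = 1`, `He₁(s) = s`,
`He_{l+1}(s) = s·He_l(s) - l·He_{l-1}(s)`. -/
noncomputable def HeC : ℕ → ℂ → ℂ
  | 0, _ => 1
  | 1, s => s
  | (l + 2), s => s * HeC (l + 1) s - ((l + 1 : ℕ) : ℂ) * HeC l s

lemma heC_succ (n : ℕ) (t : ℂ) :
    HeC (n + 1) t = t * HeC n t - (n : ℂ) * HeC (n - 1) t := by
  cases n with
  | zero => simp [HeC]
  | succ m => simp [HeC]

lemma heC_hasDerivAt : ∀ (n : ℕ) (t : ℂ), HasDerivAt (HeC n) ((n : ℂ) * HeC (n - 1) t) t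
  | 0, t => by
    have h0 : HeC 0 = fun _ : ℂ => (1 : ℂ) := funext fun x => by simp [HeC]
    rw [h0]
    simpa using hasDerivAt_const t (1 : ℂ)
  | 1, t => by
    have h1 : HeC 1 = fun x : ℂ => x := funext fun x => by simp [HeC]
    rw [h1]
    simpa [HeC] using hasDerivAt_id' t
  | (m + 2), t => by
    have h2 : HeC (m + 2) = fun x : ℂ =>
        x * HeC (m + 1) x - ((m + 1 : ℕ) : ℂ) * HeC m x := funext fun x => by simp [HeC]
    rw [h2]
    have ih1 := heC_hasDerivAt (m + 1) t
    have ih0 := heC_hasDerivAt m t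
    have h := ((hasDerivAt_id t).mul ih1).sub (ih0.const_mul ((m + 1 : ℕ) : ℂ))
    replace h : HasDerivAt (fun x : ℂ => x * HeC (m + 1) x - ((m + 1 : ℕ) : ℂ) * HeC m x)
        (1 * HeC (m + 1) t + t * (((m + 1 : ℕ) : ℂ) * HeC (m + 1 - 1) t) -
          ((m + 1 : ℕ) : ℂ) * ((m : ℂ) * HeC (m - 1) t)) t := h
    convert h using 1
    have hrec := heC_succ m t
    show ((m + 2 : ℕ) : ℂ) * HeC (m + 1) t =
      1 * HeC (m + 1) t + t * (((m + 1 : ℕ) : ℂ) * HeC m t) -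
        ((m + 1 : ℕ) : ℂ) * ((m : ℂ) * HeC (m - 1) t)
    rw [hrec]
    push_cast
    ring

noncomputable def fgen (s : ℂ) : ℂ → ℂ := fun ν => Complex.exp (ν * s - ν ^ 2 / 2)

lemma fgen_hasDerivAt (s ν : ℂ) : HasDerivAt (fgen s) ((s - ν) * fgen s ν) ν := by
  have h : HasDerivAt (fun ν : ℂ => ν * s - ν ^ 2 / 2) (s - ν) ν := by
    have := ((hasDerivAt_id ν).mul_const s).sub ((hasDerivAt_pow 2 ν).div_const 2)
    replace this : HasDerivAt (fun ν : ℂ => ν * s - ν ^ 2 / 2)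
        (1 * s - ((2 : ℕ) : ℂ) * ν ^ (2 - 1) / 2) ν := this
    convert this using 1
    simp
  have h2 := h.cexp
  replace h2 : HasDerivAt (fun ν : ℂ => Complex.exp (ν * s - ν ^ 2 / 2))
      (Complex.exp (ν * s - ν ^ 2 / 2) * (s - ν)) ν := h2
  show HasDerivAt (fun ν : ℂ => Complex.exp (ν * s - ν ^ 2 / 2)) ((s - ν) * fgen s ν) ν
  convert h2 using 1
  simp [fgen]
  ring

lemma iteratedDeriv_fgen (s : ℂ) : ∀ (n : ℕ) (ν : ℂ),
    iteratedDeriv n (fgen s) ν = HeC n (s - ν) * fgen s ν := by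
  intro n
  induction n with
  | zero => intro ν; simp [HeC]
  | succ n ih =>
    intro ν
    rw [iteratedDeriv_succ]
    have hfe : iteratedDeriv n (fgen s) = fun ν => HeC n (s - ν) * fgen s ν := funext ih
    rw [hfe]
    have h1 : HasDerivAt (fun ν : ℂ => HeC n (s - ν))
        (((n : ℂ) * HeC (n - 1) (s - ν)) * (-1)) ν :=
      (heC_hasDerivAt n (s - ν)).comp ν (((hasDerivAt_id ν).const_sub s))
    have h := h1.mul (fgen_hasDerivAt s ν)
    rw [(show HasDerivAt (fun ν => HeC n (s - ν) * fgen s ν) _ ν from h).deriv]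
    rw [heC_succ n (s - ν)]
    ring

/-- **Contour integral representation of Hermite polynomials**: for every `l`, `s ∈ ℂ`
and radius `r > 0`,
`He_l(s) = (l!/(2πi)) ∮_{|ν|=r} e^{νs - ν²/2} ν^{-l-1} dν`. -/
theorem hermite_contour_integral (l : ℕ) (s : ℂ) (r : ℝ) (hr : 0 < r) :
    HeC l s =
      ((Nat.factorial l : ℂ) / (2 * Real.pi * Complex.I)) *
        ∮ ν in C(0, r), Complex.exp (ν * s - ν ^ 2 / 2) * ν ^ (-(l : ℤ) - 1) := by
  set f := fgen s with hf
  have hdiff : Differentiable ℂ f := fun ν => (fgen_hasDerivAt s ν).differentiableAt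
  set R : NNReal := r.toNNReal with hR
  have hR0 : 0 < R := by simpa [hR] using hr
  have hps := hdiff.hasFPowerSeriesOnBall 0 hR0
  have hfact := hps.factorial_smul (1 : ℂ) l
  have hiter : iteratedFDeriv ℂ l f 0 (fun _ => 1) = HeC l s := by
    rw [← iteratedDeriv_eq_iteratedFDeriv, iteratedDeriv_fgen s l 0]
    simp [fgen]
  have hcoeff := cauchyPowerSeries_apply f 0 R l 1
  have hRr : (R : ℝ) = r := Real.coe_toNNReal r hr.le
  rw [hcoeff, hiter] at hfact
  have hint : (∮ z in C(0, (R : ℝ)), (1 / (z - 0)) ^ l • (z - 0)⁻¹ • f z) =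
      ∮ ν in C(0, r), Complex.exp (ν * s - ν ^ 2 / 2) * ν ^ (-(l : ℤ) - 1) := by
    rw [hRr]
    congr 1
    funext z
    have hz : (-(l : ℤ) - 1) = -((l + 1 : ℕ) : ℤ) := by push_cast; ring
    rw [hz, zpow_neg, zpow_natCast]
    simp only [sub_zero, smul_eq_mul, one_div, inv_pow, pow_succ, mul_inv, hf, fgen]
    ring
  rw [hint] at hfact
  rw [← hfact]
  simp only [smul_eq_mul, nsmul_eq_mul, div_eq_mul_inv]
  ring
end

section
/- Real integral representation of Hermite polynomials: for every natural number l and every s ∈ ℝ, He_l(s) = (1/√(2π)) · ∫_{−∞}^{∞} (s + iy)^l · e^{−y²/2} dy, where the integral is a complex-valued Gaussian integral whose value is real. -/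
/-- The probabilist's Hermite polynomials: `He₀ = 1`, `He₁(t) = t`,
`He_{l+1}(t) = t·He_l(t) - l·He_{l-1}(t)`. -/
noncomputable def He : ℕ → ℝ → ℝ
  | 0, _ => 1
  | 1, t => t
  | (l + 2), t => t * He (l + 1) t - ((l + 1 : ℕ) : ℝ) * He l t

open MeasureTheory Real Complex

private lemma intAux (k : ℕ) : Integrable fun y : ℝ ↦ |y| ^ k * Real.exp (-y ^ 2 / 2) := by
  have h := (integrable_rpow_mul_exp_neg_mul_sq (b := 1/2) (by norm_num)
    (s := (k : ℝ)) (lt_of_lt_of_le neg_one_lt_zero (Nat.cast_nonneg k))).abs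
  refine h.congr (Filter.Eventually.of_forall fun y ↦ ?_)
  simp only [Real.rpow_natCast, abs_mul, abs_pow, abs_of_pos (Real.exp_pos _)]
  ring_nf

private lemma intAux2 (s : ℝ) (l : ℕ) :
    Integrable fun y : ℝ ↦ (|s| + |y|) ^ l * Real.exp (-y ^ 2 / 2) := by
  simp_rw [add_pow, Finset.sum_mul]
  apply integrable_finset_sum
  intro k _
  have := (intAux (l - k)).const_mul (|s| ^ k * (l.choose k : ℝ))
  refine this.congr (Filter.Eventually.of_forall fun y ↦ ?_)
  ring

private lemma intC (s : ℝ) (l : ℕ) :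
    Integrable fun y : ℝ ↦ ((s : ℂ) + Complex.I * y) ^ l * (Real.exp (-y ^ 2 / 2) : ℂ) := by
  refine (intAux2 s l).mono' (by apply Continuous.aestronglyMeasurable; fun_prop)
    (Filter.Eventually.of_forall fun y ↦ ?_)
  rw [norm_mul, norm_pow]
  have h1 : ‖(s : ℂ) + Complex.I * y‖ ≤ |s| + |y| := by
    refine (norm_add_le _ _).trans ?_
    simp [Complex.norm_real]
  rw [Complex.norm_real, Real.norm_eq_abs, abs_of_pos (Real.exp_pos _)]
  gcongr

private lemma intCy (s : ℝ) (l : ℕ) :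
    Integrable fun y : ℝ ↦
      (y : ℂ) * (((s : ℂ) + Complex.I * y) ^ l * (Real.exp (-y ^ 2 / 2) : ℂ)) := by
  refine (intAux2 s (l + 1)).mono' (by apply Continuous.aestronglyMeasurable; fun_prop)
    (Filter.Eventually.of_forall fun y ↦ ?_)
  simp only [norm_mul, norm_pow, Complex.norm_real, Real.norm_eq_abs,
    abs_of_pos (Real.exp_pos _)]
  rw [pow_succ']
  have h1 : ‖(s : ℂ) + Complex.I * y‖ ≤ |s| + |y| := by
    refine (norm_add_le _ _).trans ?_
    simp [Complex.norm_real]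
  have h2 : |y| ≤ |s| + |y| := le_add_of_nonneg_left (abs_nonneg s)
  rw [← mul_assoc]
  gcongr
  rw [pow_succ']
  gcongr

private lemma hdF (s : ℝ) (l : ℕ) (y : ℝ) :
    HasDerivAt (fun y : ℝ ↦ ((s : ℂ) + Complex.I * y) ^ (l + 1) * (Real.exp (-y ^ 2 / 2) : ℂ))
      (((l + 1 : ℕ) : ℂ) * Complex.I * ((s : ℂ) + Complex.I * y) ^ l * (Real.exp (-y ^ 2 / 2) : ℂ)
        + ((s : ℂ) + Complex.I * y) ^ (l + 1) * ((-y : ℂ) * (Real.exp (-y ^ 2 / 2) : ℂ))) y := by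
  have h1 : HasDerivAt (fun y : ℝ ↦ (s : ℂ) + Complex.I * y) Complex.I y := by
    simpa using ((Complex.ofRealCLM.hasDerivAt (x := y)).const_mul Complex.I).const_add (s : ℂ)
  have h2 : HasDerivAt (fun y : ℝ ↦ (Real.exp (-y ^ 2 / 2) : ℂ))
      ((-y : ℝ) * Real.exp (-y ^ 2 / 2) : ℝ) y := by
    have : HasDerivAt (fun y : ℝ ↦ Real.exp (-y ^ 2 / 2)) (-y * Real.exp (-y ^ 2 / 2)) y := by
      have h := HasDerivAt.exp (((hasDerivAt_pow 2 y).neg).div_const 2)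
      refine h.congr_deriv ?_
      simp
      ring
    exact this.ofReal_comp
  have hp := (hasDerivAt_pow (l + 1) ((s : ℂ) + Complex.I * y)).comp y h1
  have := hp.mul h2
  refine this.congr_deriv ?_
  simp only [Function.comp_def]
  push_cast
  ring

private lemma byparts (s : ℝ) (l : ℕ) :
    (∫ y : ℝ, (y : ℂ) * (((s : ℂ) + Complex.I * y) ^ (l + 1) * (Real.exp (-y ^ 2 / 2) : ℂ)))
      = ((l + 1 : ℕ) : ℂ) * Complex.I *
        ∫ y : ℝ, ((s : ℂ) + Complex.I * y) ^ l * (Real.exp (-y ^ 2 / 2) : ℂ) := by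
  have hint1 : Integrable fun y : ℝ ↦
      ((l + 1 : ℕ) : ℂ) * Complex.I * ((s : ℂ) + Complex.I * y) ^ l
        * (Real.exp (-y ^ 2 / 2) : ℂ) := by
    have := (intC s l).const_mul (((l + 1 : ℕ) : ℂ) * Complex.I)
    refine this.congr (Filter.Eventually.of_forall fun y ↦ ?_)
    ring
  have hint2 : Integrable fun y : ℝ ↦
      ((s : ℂ) + Complex.I * y) ^ (l + 1) * ((-y : ℂ) * (Real.exp (-y ^ 2 / 2) : ℂ)) := by
    have := (intCy s (l + 1)).neg
    refine this.congr (Filter.Eventually.of_forall fun y ↦ ?_)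
    simp only [Pi.neg_apply]
    ring
  have hzero := integral_eq_zero_of_hasDerivAt_of_integrable (hdF s l) (hint1.add hint2)
    (intC s (l + 1))
  rw [integral_add hint1 hint2] at hzero
  have e1 : (∫ y : ℝ, ((l + 1 : ℕ) : ℂ) * Complex.I * ((s : ℂ) + Complex.I * y) ^ l
      * (Real.exp (-y ^ 2 / 2) : ℂ))
      = ((l + 1 : ℕ) : ℂ) * Complex.I
        * ∫ y : ℝ, ((s : ℂ) + Complex.I * y) ^ l * (Real.exp (-y ^ 2 / 2) : ℂ) := by
    rw [← integral_const_mul]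
    congr 1 with y
    ring
  have e2 : (∫ y : ℝ, ((s : ℂ) + Complex.I * y) ^ (l + 1)
      * ((-y : ℂ) * (Real.exp (-y ^ 2 / 2) : ℂ)))
      = -∫ y : ℝ, (y : ℂ) * (((s : ℂ) + Complex.I * y) ^ (l + 1)
        * (Real.exp (-y ^ 2 / 2) : ℂ)) := by
    rw [← integral_neg]
    congr 1 with y
    ring
  rw [e1, e2] at hzero
  linear_combination -hzero

private lemma byparts0 (s : ℝ) :
    (∫ y : ℝ, (y : ℂ) * (Real.exp (-y ^ 2 / 2) : ℂ)) = 0 := by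
  have hd : ∀ y : ℝ, HasDerivAt (fun y : ℝ ↦ (Real.exp (-y ^ 2 / 2) : ℂ))
      ((-y : ℝ) * Real.exp (-y ^ 2 / 2) : ℝ) y := by
    intro y
    have : HasDerivAt (fun y : ℝ ↦ Real.exp (-y ^ 2 / 2)) (-y * Real.exp (-y ^ 2 / 2)) y := by
      have h := HasDerivAt.exp (((hasDerivAt_pow 2 y).neg).div_const 2)
      refine h.congr_deriv ?_
      simp
      ring
    exact this.ofReal_comp
  have hint : Integrable fun y : ℝ ↦ ((-y : ℝ) * Real.exp (-y ^ 2 / 2) : ℝ) := by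
    have := (integrable_mul_exp_neg_mul_sq (b := 1/2) (by norm_num)).neg
    refine this.congr (Filter.Eventually.of_forall fun y ↦ ?_)
    simp only [Pi.neg_apply]
    ring_nf
  have hintC : Integrable fun y : ℝ ↦ (((-y : ℝ) * Real.exp (-y ^ 2 / 2) : ℝ) : ℂ) :=
    hint.ofReal
  have hzero := integral_eq_zero_of_hasDerivAt_of_integrable hd hintC
    (by simpa using intC s 0)
  have : (∫ y : ℝ, (((-y : ℝ) * Real.exp (-y ^ 2 / 2) : ℝ) : ℂ))
      = -∫ y : ℝ, (y : ℂ) * (Real.exp (-y ^ 2 / 2) : ℂ) := by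
    rw [← integral_neg]
    congr 1 with y
    push_cast
    ring
  rw [this] at hzero
  exact neg_eq_zero.mp hzero

private lemma gauss0 :
    (∫ y : ℝ, (Real.exp (-y ^ 2 / 2) : ℂ)) = (Real.sqrt (2 * Real.pi) : ℂ) := by
  rw [show (∫ y : ℝ, (Real.exp (-y ^ 2 / 2) : ℂ))
      = ((∫ y : ℝ, Real.exp (-y ^ 2 / 2) : ℝ) : ℂ) from integral_ofReal]
  norm_cast
  have h := integral_gaussian (1/2)
  rw [show Real.pi / (1/2) = 2 * Real.pi by ring] at h
  rw [← h]
  congr 1 with y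
  ring_nf

private lemma key_s13 (s : ℝ) (l : ℕ) :
    (∫ y : ℝ, ((s : ℂ) + Complex.I * y) ^ l * (Real.exp (-y ^ 2 / 2) : ℂ))
      = (He l s : ℂ) * (Real.sqrt (2 * Real.pi) : ℂ) := by
  induction l using Nat.twoStepInduction with
  | zero =>
    simp only [pow_zero, one_mul, He]
    rw [gauss0]
    norm_num
  | one =>
    have eInt : Integrable fun y : ℝ ↦ (Real.exp (-y ^ 2 / 2) : ℂ) := by simpa using intC s 0
    have hA : Integrable fun y : ℝ ↦ (s : ℂ) * (Real.exp (-y ^ 2 / 2) : ℂ) :=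
      eInt.const_mul _
    have hB : Integrable fun y : ℝ ↦
        Complex.I * ((y : ℂ) * (Real.exp (-y ^ 2 / 2) : ℂ)) := by
      have := (intCy s 0).const_mul Complex.I
      refine this.congr (Filter.Eventually.of_forall fun y ↦ ?_)
      ring
    have : (∫ y : ℝ, ((s : ℂ) + Complex.I * y) ^ 1 * (Real.exp (-y ^ 2 / 2) : ℂ))
        = ∫ y : ℝ, ((s : ℂ) * (Real.exp (-y ^ 2 / 2) : ℂ)
          + Complex.I * ((y : ℂ) * (Real.exp (-y ^ 2 / 2) : ℂ))) := by
      congr 1 with y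
      ring
    rw [this, integral_add hA hB, integral_const_mul, integral_const_mul, byparts0 s, gauss0]
    simp [He]
  | more n ihn ihn1 =>
    have split : (∫ y : ℝ, ((s : ℂ) + Complex.I * y) ^ (n + 2) * (Real.exp (-y ^ 2 / 2) : ℂ))
        = ∫ y : ℝ, ((s : ℂ) * (((s : ℂ) + Complex.I * y) ^ (n + 1) * (Real.exp (-y ^ 2 / 2) : ℂ))
          + Complex.I * ((y : ℂ) * (((s : ℂ) + Complex.I * y) ^ (n + 1)
            * (Real.exp (-y ^ 2 / 2) : ℂ)))) := by
      congr 1 with y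
      ring
    have hA : Integrable fun y : ℝ ↦
        (s : ℂ) * (((s : ℂ) + Complex.I * y) ^ (n + 1) * (Real.exp (-y ^ 2 / 2) : ℂ)) :=
      (intC s (n + 1)).const_mul _
    have hB : Integrable fun y : ℝ ↦
        Complex.I * ((y : ℂ) * (((s : ℂ) + Complex.I * y) ^ (n + 1)
          * (Real.exp (-y ^ 2 / 2) : ℂ))) :=
      (intCy s (n + 1)).const_mul _
    rw [split, integral_add hA hB, integral_const_mul, integral_const_mul, byparts s n,
      ihn, ihn1]
    have hHe : He (n + 2) s = s * He (n + 1) s - ((n + 1 : ℕ) : ℝ) * He n s := rfl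
    rw [hHe]
    push_cast
    ring_nf
    simp [Complex.I_sq]
    ring

/-- **Real integral representation of Hermite polynomials**: for every `l` and `s ∈ ℝ`,
`He_l(s) = (1/√(2π)) ∫_{-∞}^{∞} (s + iy)^l e^{-y²/2} dy`, the complex Gaussian integral
having real value. -/
theorem hermite_real_integral_representation (l : ℕ) (s : ℝ) :
    (He l s : ℂ) =
      (1 / (Real.sqrt (2 * Real.pi) : ℂ)) *
        ∫ y : ℝ, ((s : ℂ) + Complex.I * (y : ℂ)) ^ l * (Real.exp (-y ^ 2 / 2) : ℂ) := by
  rw [key_s13 s l]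
  have h : (Real.sqrt (2 * Real.pi) : ℂ) ≠ 0 := by
    norm_cast
    exact (Real.sqrt_pos.mpr (by positivity)).ne'
  rw [mul_comm]
  rw [mul_one_div, mul_div_assoc, div_self h, mul_one]
end

section
/- Critical points for the constant specialization: let α, c > 0 with αc ≠ 1, and set z_± = (α(c+1) ± (α+1)√(αc)) / (α(αc−1)) and t_± = (α(c−1) ± 2√(αc)) / (α+1). Then 1 − α·z_± ≠ 0 and z_± ≠ −1, each of z₊ and z₋ satisfies α·z/(1−α·z)² = c·z/(1+z)², and moreover { α·z₊/(1−α·z₊) + c/(z₊+1), α·z₋/(1−α·z₋) + c/(z₋+1) } = { t₋, t₊ } as sets; furthermore the only solutions of α·z/(1−α·z)² = c·z/(1+z)² in ℝ ∖ {1/α, −1} are 0, z₊ and z₋. -/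
/-- **Critical points for the constant specialization**: for `α, c > 0` with `αc ≠ 1`,
setting `z_± = (α(c+1) ± (α+1)√(αc))/(α(αc-1))` and `t_± = (α(c-1) ± 2√(αc))/(α+1)`,
the points `z_±` avoid the poles `1/α` and `-1`, satisfy
`αz/(1-αz)² = cz/(1+z)²`, are mapped onto `{t₋, t₊}` by `z ↦ αz/(1-αz) + c/(z+1)`,
and together with `0` they are the only solutions of `αz/(1-αz)² = cz/(1+z)²`
away from the poles. -/
theorem constant_specialization_critical_points
    (α c : ℝ) (hα : 0 < α) (hc : 0 < c) (hne : α * c ≠ 1)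
    (zp zm tp tm : ℝ)
    (hzp : zp = (α * (c + 1) + (α + 1) * Real.sqrt (α * c)) / (α * (α * c - 1)))
    (hzm : zm = (α * (c + 1) - (α + 1) * Real.sqrt (α * c)) / (α * (α * c - 1)))
    (htp : tp = (α * (c - 1) + 2 * Real.sqrt (α * c)) / (α + 1))
    (htm : tm = (α * (c - 1) - 2 * Real.sqrt (α * c)) / (α + 1)) :
    (1 - α * zp ≠ 0) ∧ (1 - α * zm ≠ 0) ∧ zp ≠ -1 ∧ zm ≠ -1 ∧
    (α * zp / (1 - α * zp) ^ 2 = c * zp / (1 + zp) ^ 2) ∧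
    (α * zm / (1 - α * zm) ^ 2 = c * zm / (1 + zm) ^ 2) ∧
    ({α * zp / (1 - α * zp) + c / (zp + 1),
      α * zm / (1 - α * zm) + c / (zm + 1)} : Set ℝ) = {tm, tp} ∧
    (∀ z : ℝ, z ≠ 1 / α → z ≠ -1 →
      α * z / (1 - α * z) ^ 2 = c * z / (1 + z) ^ 2 →
        z = 0 ∨ z = zp ∨ z = zm) := by
  set s := Real.sqrt (α * c) with hsdef
  have hα0 : α ≠ 0 := ne_of_gt hα
  have hs2 : s ^ 2 = α * c := Real.sq_sqrt (by positivity)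
  have hs : 0 < s := Real.sqrt_pos.mpr (by positivity)
  have hs1 : s ≠ 1 := by
    intro h; apply hne; rw [← hs2, h]; norm_num
  have hsm1 : s - 1 ≠ 0 := sub_ne_zero.mpr hs1
  have hsp1 : s + 1 ≠ 0 := by positivity
  have hα1 : α + 1 ≠ 0 := by positivity
  have hcs : c = s ^ 2 / α := by field_simp [hs2]; linear_combination -hs2
  have hd : s ^ 2 * α - α ≠ 0 := by
    have h : s ^ 2 * α - α = α * (s - 1) * (s + 1) := by ring
    rw [h]; exact mul_ne_zero (mul_ne_zero hα0 hsm1) hsp1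
  have hA : α * (α * c - 1) ≠ 0 := mul_ne_zero hα0 (sub_ne_zero.mpr hne)
  have hB1 : α * (s - 1) ≠ 0 := mul_ne_zero hα0 hsm1
  have hB2 : α * (s + 1) ≠ 0 := mul_ne_zero hα0 hsp1
  have hzp' : zp = (s + α) / (α * (s - 1)) := by
    rw [hzp, div_eq_div_iff hA hB1]
    linear_combination (α + α ^ 2) * hs2
  have hzm' : zm = (s - α) / (α * (s + 1)) := by
    rw [hzm, div_eq_div_iff hA hB2]
    linear_combination (-(α + α ^ 2)) * hs2
  have e1 : 1 - α * zp = -(α + 1) / (s - 1) := by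
    rw [hzp']; field_simp; ring
  have e2 : 1 + zp = (α + 1) * s / (α * (s - 1)) := by
    rw [hzp']; field_simp; ring
  have e3 : 1 - α * zm = (α + 1) / (s + 1) := by
    rw [hzm']; field_simp; ring
  have e4 : 1 + zm = (α + 1) * s / (α * (s + 1)) := by
    rw [hzm']; field_simp; ring
  have h1 : 1 - α * zp ≠ 0 := by
    rw [e1]; exact div_ne_zero (neg_ne_zero.mpr hα1) hsm1
  have h2 : 1 - α * zm ≠ 0 := by
    rw [e3]; exact div_ne_zero hα1 hsp1
  have h3 : zp ≠ -1 := by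
    intro h
    have : (1 : ℝ) + zp = 0 := by rw [h]; ring
    rw [e2] at this
    exact (div_ne_zero (mul_ne_zero hα1 (ne_of_gt hs)) (mul_ne_zero hα0 hsm1)) this
  have h4 : zm ≠ -1 := by
    intro h
    have : (1 : ℝ) + zm = 0 := by rw [h]; ring
    rw [e4] at this
    exact (div_ne_zero (mul_ne_zero hα1 (ne_of_gt hs)) (mul_ne_zero hα0 hsp1)) this
  have h5 : α * zp / (1 - α * zp) ^ 2 = c * zp / (1 + zp) ^ 2 := by
    have L : α * zp / (1 - α * zp) ^ 2 = (s + α) * (s - 1) / (α + 1) ^ 2 := by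
      rw [e1, hzp', div_eq_div_iff (pow_ne_zero 2 (div_ne_zero (neg_ne_zero.mpr hα1) hsm1))
        (pow_ne_zero 2 hα1)]
      field_simp
    have R : c * zp / (1 + zp) ^ 2 = (s + α) * (s - 1) / (α + 1) ^ 2 := by
      rw [e2, hzp', hcs, div_eq_div_iff
        (pow_ne_zero 2 (div_ne_zero (mul_ne_zero hα1 hs.ne') hB1)) (pow_ne_zero 2 hα1)]
      field_simp
    rw [L, R]
  have h6 : α * zm / (1 - α * zm) ^ 2 = c * zm / (1 + zm) ^ 2 := by
    have L : α * zm / (1 - α * zm) ^ 2 = (s - α) * (s + 1) / (α + 1) ^ 2 := by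
      rw [e3, hzm', div_eq_div_iff (pow_ne_zero 2 (div_ne_zero hα1 hsp1))
        (pow_ne_zero 2 hα1)]
      field_simp
    have R : c * zm / (1 + zm) ^ 2 = (s - α) * (s + 1) / (α + 1) ^ 2 := by
      rw [e4, hzm', hcs, div_eq_div_iff
        (pow_ne_zero 2 (div_ne_zero (mul_ne_zero hα1 hs.ne') hB2)) (pow_ne_zero 2 hα1)]
      field_simp
    rw [L, R]
  have h7a : α * zp / (1 - α * zp) + c / (zp + 1) = tm := by
    have L : α * zp / (1 - α * zp) = -(s + α) / (α + 1) := by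
      rw [e1, hzp', div_eq_div_iff (div_ne_zero (neg_ne_zero.mpr hα1) hsm1) hα1]
      field_simp
    have R : c / (zp + 1) = s * (s - 1) / (α + 1) := by
      rw [add_comm zp 1, e2, hcs, div_eq_div_iff
        (div_ne_zero (mul_ne_zero hα1 hs.ne') hB1) hα1]
      field_simp
    rw [L, R, htm, hcs]; field_simp; ring
  have h7b : α * zm / (1 - α * zm) + c / (zm + 1) = tp := by
    have L : α * zm / (1 - α * zm) = (s - α) / (α + 1) := by
      rw [e3, hzm', div_eq_div_iff (div_ne_zero hα1 hsp1) hα1]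
      field_simp
    have R : c / (zm + 1) = s * (s + 1) / (α + 1) := by
      rw [add_comm zm 1, e4, hcs, div_eq_div_iff
        (div_ne_zero (mul_ne_zero hα1 hs.ne') hB2) hα1]
      field_simp
    rw [L, R, htp, hcs]; field_simp; ring
  refine ⟨h1, h2, h3, h4, h5, h6, ?_, ?_⟩
  · rw [h7a, h7b]
  · intro z hz1 hz2 heq
    have hz1' : 1 - α * z ≠ 0 := by
      intro h
      apply hz1
      rw [eq_div_iff hα0]
      linarith
    have hz2' : 1 + z ≠ 0 := by
      intro h; apply hz2; linarith
    have key : α * z * (1 + z) ^ 2 = c * z * (1 - α * z) ^ 2 := by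
      rw [div_eq_div_iff (pow_ne_zero 2 hz1') (pow_ne_zero 2 hz2')] at heq
      linear_combination heq
    have hlead : α * (1 - α * c) ≠ 0 := by
      apply mul_ne_zero hα0
      intro h
      apply hne
      linarith
    have factored : (α * (s - 1)) * (α * (s + 1)) *
          (α * z * (1 + z) ^ 2 - c * z * (1 - α * z) ^ 2) =
        α * (1 - α * c) * z *
          ((α * (s - 1) * z - (s + α)) * (α * (s + 1) * z - (s - α))) := by
      linear_combination (-(α * z) + 2 * α ^ 2 * z ^ 2 + α ^ 3 * z + 2 * α ^ 3 * z ^ 2) * hs2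
    have hzero : z * ((α * (s - 1) * z - (s + α)) * (α * (s + 1) * z - (s - α))) = 0 := by
      have h0 : α * (1 - α * c) * z *
          ((α * (s - 1) * z - (s + α)) * (α * (s + 1) * z - (s - α))) = 0 := by
        rw [← factored]
        have : α * z * (1 + z) ^ 2 - c * z * (1 - α * z) ^ 2 = 0 := by
          linear_combination key
        rw [this, mul_zero]
      have h0' : α * (1 - α * c) *
          (z * ((α * (s - 1) * z - (s + α)) * (α * (s + 1) * z - (s - α)))) = 0 := by
        linear_combination h0
      exact (mul_eq_zero.mp h0').resolve_left hlead
    rcases mul_eq_zero.mp hzero with h | h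
    · exact Or.inl h
    · rcases mul_eq_zero.mp h with h | h
      · refine Or.inr (Or.inl ?_)
        rw [hzp', eq_div_iff hB1]
        linear_combination h
      · refine Or.inr (Or.inr ?_)
        rw [hzm', eq_div_iff hB2]
        linear_combination h
end

section
/- Limit density for the constant specialization (Krawtchouk ensemble): let α, c > 0, set t_± = (α(c−1) ± 2√(αc))/(α+1), and let t ∈ (t₋, t₊). Then (c−t)(t+1) > 0, the quadratic equation α(1+t)·z² + (α(1+t) − cα − t)·z + (c−t) = 0 — equivalently α·z/(1−α·z) + c/(z+1) = t — has exactly two roots in ℂ, they are non-real complex conjugates z₁ and z̄₁, and the root z₁ with Im z₁ > 0 satisfies arg z₁ = arccos( (α(c−1) + t(1−α)) / (2·√(α·(c−t)·(t+1))) ), so that the limit density is ρ(t) = (1/π)·arccos( (α(c−1) + t(1−α)) / (2√(α(c−t)(t+1))) ). -/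
set_option maxHeartbeats 1000000


open Complex in
/-- **Limit density for the constant specialization (Krawtchouk ensemble)**: for
`α, c > 0` and `t ∈ (t₋, t₊)` with `t_± = (α(c-1) ± 2√(αc))/(α+1)`, one has
`(c-t)(t+1) > 0`, the quadratic `α(1+t)z² + (α(1+t) - cα - t)z + (c-t) = 0` —
equivalently `αz/(1-αz) + c/(z+1) = t` — has exactly two roots in `ℂ`, which are
non-real complex conjugates, and the root `z₁` with `Im z₁ > 0` satisfies
`arg z₁ = arccos((α(c-1) + t(1-α))/(2√(α(c-t)(t+1))))`, so that the limit density is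
`ρ(t) = (1/π)·arg z₁ = (1/π)·arccos(⋯)`. -/
theorem constant_specialization_limit_density
    (α c : ℝ) (hα : 0 < α) (hc : 0 < c) (t : ℝ)
    (ht : t ∈ Set.Ioo ((α * (c - 1) - 2 * Real.sqrt (α * c)) / (α + 1))
                      ((α * (c - 1) + 2 * Real.sqrt (α * c)) / (α + 1))) :
    0 < (c - t) * (t + 1) ∧
    ∃ z₁ : ℂ, 0 < z₁.im ∧
      (∀ z : ℂ, (α : ℂ) * (1 + (t : ℂ)) * z ^ 2 +
          ((α : ℂ) * (1 + (t : ℂ)) - (c : ℂ) * (α : ℂ) - (t : ℂ)) * z +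
            ((c : ℂ) - (t : ℂ)) = 0 ↔ (z = z₁ ∨ z = (starRingEnd ℂ) z₁)) ∧
      ((α : ℂ) * z₁ / (1 - (α : ℂ) * z₁) + (c : ℂ) / (z₁ + 1) = (t : ℂ)) ∧
      Complex.arg z₁ =
        Real.arccos ((α * (c - 1) + t * (1 - α)) /
          (2 * Real.sqrt (α * (c - t) * (t + 1)))) := by
  obtain ⟨htl, htr⟩ := ht
  set s0 := Real.sqrt (α * c) with hs0def
  have hs0nn : 0 ≤ s0 := Real.sqrt_nonneg _
  have hs0sq : s0 ^ 2 = α * c := Real.sq_sqrt (by positivity)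
  have hα1 : (0:ℝ) < α + 1 := by linarith
  have hl : α * (c - 1) - 2 * s0 < (α + 1) * t := by
    rw [div_lt_iff₀ hα1] at htl; linarith
  have hr : (α + 1) * t < α * (c - 1) + 2 * s0 := by
    rw [lt_div_iff₀ hα1] at htr; linarith
  have ht1 : 0 < t + 1 := by nlinarith [sq_nonneg (s0 - 1)]
  have h2s0 : s0 ≤ (α + c) / 2 := by
    rw [hs0def, show (α + c) / 2 = Real.sqrt (((α + c) / 2) ^ 2) from
      (Real.sqrt_sq (by positivity)).symm]
    exact Real.sqrt_le_sqrt (by nlinarith [sq_nonneg (α - c)])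
  have hct : 0 < c - t := by nlinarith [h2s0, hr]
  have hd : 0 < 4 * α * c - ((α + 1) * t - α * (c - 1)) ^ 2 := by
    nlinarith [mul_pos (by nlinarith : (0:ℝ) < 2 * s0 - ((α+1)*t - α*(c-1)))
      (by nlinarith : (0:ℝ) < 2 * s0 + ((α+1)*t - α*(c-1)))]
  set a : ℝ := α * (1 + t) with hadef
  set b : ℝ := α * (1 + t) - c * α - t with hbdef
  set d : ℝ := 4 * α * c - ((α + 1) * t - α * (c - 1)) ^ 2 with hddef
  have ha : 0 < a := mul_pos hα (by linarith)
  have hkey : b ^ 2 + d = 4 * a * (c - t) := by rw [hadef, hbdef, hddef]; ring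
  set s : ℝ := Real.sqrt d with hsdef
  have hs : 0 < s := Real.sqrt_pos.2 hd
  have hssq : s ^ 2 = d := Real.sq_sqrt hd.le
  set R : ℝ := -b / (2 * a) with hRdef
  set M : ℝ := s / (2 * a) with hMdef
  have hM : 0 < M := div_pos hs (by linarith)
  set z₁ : ℂ := (R : ℂ) + (M : ℂ) * Complex.I with hz₁def
  have him : z₁.im = M := by simp [hz₁def]
  have hre : z₁.re = R := by simp [hz₁def]
  have hconj : (starRingEnd ℂ) z₁ = (R : ℂ) - (M : ℂ) * Complex.I := by
    simp [hz₁def, Complex.ext_iff]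
  -- complex casts of key relations
  have h2R : a * (2 * R) = -b := by rw [hRdef]; field_simp
  have hprod : a * (R ^ 2 + M ^ 2) = c - t := by
    rw [hRdef, hMdef, div_pow, div_pow, ← add_div, mul_div_assoc', div_eq_iff (by positivity)]; linear_combination a * hkey + a * hssq
  have h2R' : (a : ℂ) * (2 * R) = -(b : ℂ) := by exact_mod_cast congrArg Complex.ofReal h2R
  have hprod' : (a : ℂ) * ((R:ℂ) ^ 2 + (M:ℂ) ^ 2) = (c : ℂ) - (t : ℂ) := by
    exact_mod_cast congrArg Complex.ofReal hprod
  have hfac : ∀ z : ℂ, (α : ℂ) * (1 + (t : ℂ)) * z ^ 2 +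
      ((α : ℂ) * (1 + (t : ℂ)) - (c : ℂ) * (α : ℂ) - (t : ℂ)) * z +
        ((c : ℂ) - (t : ℂ)) = (a : ℂ) * (z - z₁) * (z - (starRingEnd ℂ) z₁) := by
    intro z
    rw [hconj, hz₁def]
    have haC : (a : ℂ) = (α : ℂ) * (1 + (t : ℂ)) := by push_cast [hadef]; ring
    have hbC : (b : ℂ) = (α : ℂ) * (1 + (t : ℂ)) - (c : ℂ) * (α : ℂ) - (t : ℂ) := by
      push_cast [hbdef]; ring
    linear_combination (-z ^ 2) * haC + (-z) * hbC + z * h2R' + (-1 : ℂ) * hprod' +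
      ((a : ℂ) * (M : ℂ) ^ 2) * Complex.I_sq
  refine ⟨mul_pos hct ht1, z₁, by rw [him]; exact hM, ?_, ?_, ?_⟩
  · intro z
    rw [hfac z, mul_eq_zero, mul_eq_zero, sub_eq_zero, sub_eq_zero]
    have : (a : ℂ) ≠ 0 := by exact_mod_cast ha.ne'
    tauto
  · have hz1 : (1 : ℂ) - (α : ℂ) * z₁ ≠ 0 := by
      intro h
      have := congrArg Complex.im h
      simp [hz₁def] at this
      rcases this with h' | h'
      · exact hα.ne' h'
      · exact hM.ne' h'
    have hz2 : z₁ + 1 ≠ 0 := by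
      intro h
      have := congrArg Complex.im h
      simp [hz₁def] at this
      exact hM.ne' (by linarith)
    have hq : (α : ℂ) * (1 + (t : ℂ)) * z₁ ^ 2 +
        ((α : ℂ) * (1 + (t : ℂ)) - (c : ℂ) * (α : ℂ) - (t : ℂ)) * z₁ +
          ((c : ℂ) - (t : ℂ)) = 0 := by rw [hfac z₁]; ring
    field_simp
    linear_combination hq
  · have hz0 : z₁ ≠ 0 := by
      intro h; rw [h] at him; simp at him; exact hM.ne' him.symm
    have habs : ‖z₁‖ = Real.sqrt (R ^ 2 + M ^ 2) := by
      rw [Complex.norm_def, Complex.normSq_apply, hre, him]; ring_nf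
    have hcos := Complex.cos_arg hz0
    have harg0 : 0 ≤ Complex.arg z₁ := Complex.arg_nonneg_iff.2 (by rw [him]; exact hM.le)
    have hargpi : Complex.arg z₁ ≤ Real.pi := Complex.arg_le_pi z₁
    have heq : z₁.re / ‖z₁‖ =
        (α * (c - 1) + t * (1 - α)) / (2 * Real.sqrt (α * (c - t) * (t + 1))) := by
      rw [hre, habs]
      have h1 : R ^ 2 + M ^ 2 = (c - t) / a := by
        rw [eq_div_iff ha.ne']; linear_combination hprod
      have h2 : α * (c - t) * (t + 1) = a * (c - t) := by rw [hadef]; ring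
      have h3 : α * (c - 1) + t * (1 - α) = -b := by rw [hbdef]; ring
      rw [h1, h2, h3, Real.sqrt_div hct.le, Real.sqrt_mul ha.le]
      have hsa : 0 < Real.sqrt a := Real.sqrt_pos.2 ha
      have hsct : 0 < Real.sqrt (c - t) := Real.sqrt_pos.2 hct
      have hsa2 : Real.sqrt a ^ 2 = a := Real.sq_sqrt ha.le
      rw [hRdef]
      rw [div_div_eq_mul_div, div_eq_div_iff (by positivity) (by positivity)]
      rw [show -b / (2 * a) * Real.sqrt a * (2 * (Real.sqrt a * Real.sqrt (c - t))) =
          -b / (2 * a) * (2 * Real.sqrt a ^ 2) * Real.sqrt (c - t) by ring, hsa2]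
      rw [div_mul_cancel₀ _ (by positivity)]
    rw [← heq, ← hcos, Real.arccos_cos harg0 hargpi]
end

section
/- Limit density for the principal specialization: let γ > 0, α > 0, c > 0 and t ∈ (−1, c), and suppose that the quadratic equation α(e^{γt} − e^{−γ})·z² + ( α(e^{γ(t−c)} − e^{−γ}) − e^{γt} + 1 )·z + (1 − e^{γ(t−c)}) = 0 has non-real roots. Then its two roots are complex conjugates, both quantities e^{γ(c+1)} − e^{γ(t+1)} and e^{γ(c+t+1)} − e^{γc} are positive, and the root z₁ with Im z₁ > 0 satisfies arg z₁ = arccos( ( α·e^{cγ} − e^{(c+1)γ} − α·e^{γ(t+1)} + e^{γ(c+t+1)} ) / ( 2·√( α·(e^{γ(c+1)} − e^{γ(t+1)})·(e^{γ(c+t+1)} − e^{γc}) ) ) ); consequently the limit density equals ρ(t) = (1/π)·arccos of the displayed expression. -/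
/-- **Limit density for the principal specialization**: for `γ, α, c > 0` and
`t ∈ (-1, c)`, if the quadratic
`α(e^{γt} - e^{-γ})z² + (α(e^{γ(t-c)} - e^{-γ}) - e^{γt} + 1)z + (1 - e^{γ(t-c)}) = 0`
has non-real roots, then its two roots are complex conjugates, both
`e^{γ(c+1)} - e^{γ(t+1)}` and `e^{γ(c+t+1)} - e^{γc}` are positive, and the root `z₁`
with `Im z₁ > 0` satisfies
`arg z₁ = arccos((αe^{cγ} - e^{(c+1)γ} - αe^{γ(t+1)} + e^{γ(c+t+1)}) /
  (2√(α(e^{γ(c+1)} - e^{γ(t+1)})(e^{γ(c+t+1)} - e^{γc}))))`;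
so the limit density equals `(1/π)·arccos` of that expression. -/
theorem principal_specialization_limit_density
    (γ α c : ℝ) (hγ : 0 < γ) (hα : 0 < α) (hc : 0 < c)
    (t : ℝ) (ht : t ∈ Set.Ioo (-1 : ℝ) c)
    (hnonreal : ∃ z : ℂ,
      (α : ℂ) * ((Real.exp (γ * t) : ℂ) - (Real.exp (-γ) : ℂ)) * z ^ 2 +
        ((α : ℂ) * ((Real.exp (γ * (t - c)) : ℂ) - (Real.exp (-γ) : ℂ)) -
          (Real.exp (γ * t) : ℂ) + 1) * z +
        (1 - (Real.exp (γ * (t - c)) : ℂ)) = 0 ∧ z.im ≠ 0) :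
    0 < Real.exp (γ * (c + 1)) - Real.exp (γ * (t + 1)) ∧
    0 < Real.exp (γ * (c + t + 1)) - Real.exp (γ * c) ∧
    ∃ z₁ : ℂ, 0 < z₁.im ∧
      (∀ z : ℂ,
        (α : ℂ) * ((Real.exp (γ * t) : ℂ) - (Real.exp (-γ) : ℂ)) * z ^ 2 +
          ((α : ℂ) * ((Real.exp (γ * (t - c)) : ℂ) - (Real.exp (-γ) : ℂ)) -
            (Real.exp (γ * t) : ℂ) + 1) * z +
          (1 - (Real.exp (γ * (t - c)) : ℂ)) = 0 ↔
        (z = z₁ ∨ z = (starRingEnd ℂ) z₁)) ∧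
      Complex.arg z₁ =
        Real.arccos ((α * Real.exp (c * γ) - Real.exp ((c + 1) * γ) -
            α * Real.exp (γ * (t + 1)) + Real.exp (γ * (c + t + 1))) /
          (2 * Real.sqrt (α * (Real.exp (γ * (c + 1)) - Real.exp (γ * (t + 1))) *
            (Real.exp (γ * (c + t + 1)) - Real.exp (γ * c))))) := by
  obtain ⟨ht1, ht2⟩ := ht
  set A : ℝ := α * (Real.exp (γ * t) - Real.exp (-γ)) with hAdef
  set B : ℝ := α * (Real.exp (γ * (t - c)) - Real.exp (-γ)) - Real.exp (γ * t) + 1 with hBdef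
  set D : ℝ := 1 - Real.exp (γ * (t - c)) with hDdef
  have hexp1 : Real.exp (-γ) < Real.exp (γ * t) := Real.exp_lt_exp.2 (by nlinarith)
  have hA : 0 < A := by
    rw [hAdef]; exact mul_pos hα (by linarith)
  have hexp2 : Real.exp (γ * (t - c)) < 1 := by
    rw [show (1 : ℝ) = Real.exp 0 from (Real.exp_zero).symm]
    exact Real.exp_lt_exp.2 (by nlinarith)
  have hD : 0 < D := by rw [hDdef]; linarith
  have hcast : ∀ z : ℂ,
      (α : ℂ) * ((Real.exp (γ * t) : ℂ) - (Real.exp (-γ) : ℂ)) * z ^ 2 +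
        ((α : ℂ) * ((Real.exp (γ * (t - c)) : ℂ) - (Real.exp (-γ) : ℂ)) -
          (Real.exp (γ * t) : ℂ) + 1) * z +
        (1 - (Real.exp (γ * (t - c)) : ℂ)) =
      (A : ℂ) * z ^ 2 + (B : ℂ) * z + (D : ℂ) := by
    intro z; rw [hAdef, hBdef, hDdef]; push_cast; ring
  -- discriminant is negative
  have hΔ : B ^ 2 < 4 * A * D := by
    obtain ⟨z, hz, hzim⟩ := hnonreal
    rw [hcast] at hz
    have him : ((A : ℂ) * z ^ 2 + (B : ℂ) * z + (D : ℂ)).im = 0 := by rw [hz]; rfl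
    have hre : ((A : ℂ) * z ^ 2 + (B : ℂ) * z + (D : ℂ)).re = 0 := by rw [hz]; rfl
    simp [pow_two, Complex.add_im, Complex.add_re, Complex.mul_im, Complex.mul_re] at him hre
    have h3 : z.im * (2 * A * z.re + B) = 0 := by linear_combination him
    have hx : 2 * A * z.re + B = 0 := by
      rcases mul_eq_zero.1 h3 with h | h
      · exact absurd h hzim
      · exact h
    have hy2 : 0 < z.im ^ 2 := pow_two_pos_of_ne_zero hzim
    nlinarith [hre, hx, hy2, mul_pos (mul_pos hA hA) hy2, sq_nonneg (2 * A * z.re + B)]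
  set s : ℝ := Real.sqrt (4 * A * D - B ^ 2) with hsdef
  have hspos : 0 < s := Real.sqrt_pos.2 (by linarith)
  have hs2 : s ^ 2 = 4 * A * D - B ^ 2 := Real.sq_sqrt (by linarith)
  set z₁ : ℂ := (↑(-B / (2 * A)) : ℂ) + ↑(s / (2 * A)) * Complex.I with hz₁def
  have hre₁ : z₁.re = -B / (2 * A) := by
    simp only [hz₁def, Complex.add_re, Complex.ofReal_re, Complex.mul_re, Complex.ofReal_im,
      Complex.I_re, Complex.I_im]
    ring
  have him₁ : z₁.im = s / (2 * A) := by
    simp only [hz₁def, Complex.add_im, Complex.ofReal_im, Complex.mul_im, Complex.ofReal_re,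
      Complex.I_re, Complex.I_im]
    ring
  have himpos : 0 < z₁.im := by rw [him₁]; positivity
  have hconj : (starRingEnd ℂ) z₁ = (↑(-B / (2 * A)) : ℂ) - ↑(s / (2 * A)) * Complex.I := by
    rw [hz₁def, map_add, map_mul, Complex.conj_ofReal, Complex.conj_ofReal, Complex.conj_I]
    ring
  have hAne : (A : ℂ) ≠ 0 := by exact_mod_cast hA.ne'
  have hs2c : (s : ℂ) ^ 2 = 4 * (A : ℂ) * (D : ℂ) - (B : ℂ) ^ 2 := by
    have := congrArg (fun x : ℝ => (x : ℂ)) hs2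
    push_cast at this
    exact this
  have hfac : ∀ w : ℂ, (A : ℂ) * w ^ 2 + (B : ℂ) * w + (D : ℂ) =
      (A : ℂ) * (w - z₁) * (w - (starRingEnd ℂ) z₁) := by
    intro w
    rw [hconj, hz₁def]
    push_cast
    field_simp
    linear_combination ((s : ℂ) ^ 2) * Complex.I_sq - hs2c
  -- positivity of the two differences
  have hpos1 : 0 < Real.exp (γ * (c + 1)) - Real.exp (γ * (t + 1)) := by
    have : Real.exp (γ * (t + 1)) < Real.exp (γ * (c + 1)) :=
      Real.exp_lt_exp.2 (by nlinarith)
    linarith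
  have hpos2 : 0 < Real.exp (γ * (c + t + 1)) - Real.exp (γ * c) := by
    have : Real.exp (γ * c) < Real.exp (γ * (c + t + 1)) :=
      Real.exp_lt_exp.2 (by nlinarith)
    linarith
  refine ⟨hpos1, hpos2, z₁, himpos, ?_, ?_⟩
  · intro w
    rw [hcast w, hfac w]
    simp [mul_eq_zero, sub_eq_zero, hAne, or_assoc]
  · -- the argument computation
    have hAne' : A ≠ 0 := hA.ne'
    have hDne' : D ≠ 0 := hD.ne'
    have hz₁ne : z₁ ≠ 0 := by
      intro h; rw [h] at himpos; simp at himpos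
    have habs : ‖z₁‖ = Real.sqrt (D / A) := by
      rw [Complex.norm_def, Complex.normSq_apply, hre₁, him₁]
      congr 1
      clear_value A B D s
      field_simp
      linear_combination hs2
    have harg : Complex.arg z₁ = Real.arccos (z₁.re / ‖z₁‖) := by
      rw [← Complex.cos_arg hz₁ne,
        Real.arccos_cos (Complex.arg_nonneg_iff.2 himpos.le) (Complex.arg_le_pi z₁)]
    have hsa : 0 < Real.sqrt A := Real.sqrt_pos.2 hA
    have hsd : 0 < Real.sqrt D := Real.sqrt_pos.2 hD
    have hsa2 : Real.sqrt A ^ 2 = A := Real.sq_sqrt hA.le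
    have hsd2 : Real.sqrt D ^ 2 = D := Real.sq_sqrt hD.le
    have hval : z₁.re / ‖z₁‖ = -B / (2 * (Real.sqrt A * Real.sqrt D)) := by
      rw [hre₁, habs, Real.sqrt_div hD.le]
      have h1 : Real.sqrt D / Real.sqrt A = (Real.sqrt A * Real.sqrt D) / A := by
        rw [div_eq_div_iff hsa.ne' hAne']
        linear_combination (-Real.sqrt D) * hsa2
      rw [h1, div_div_eq_mul_div, div_mul_eq_mul_div, div_div,
        show -B * A = A * -B by ring,
        show 2 * A * (Real.sqrt A * Real.sqrt D) = A * (2 * (Real.sqrt A * Real.sqrt D)) by ring,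
        mul_div_mul_left _ _ hAne']
    set K : ℝ := Real.exp (γ * c) * Real.exp γ with hKdef
    have hK : 0 < K := by positivity
    have hvne : Real.exp (γ * c) ≠ 0 := (Real.exp_pos _).ne'
    have hwne : Real.exp γ ≠ 0 := (Real.exp_pos _).ne'
    have hN : α * Real.exp (c * γ) - Real.exp ((c + 1) * γ) -
        α * Real.exp (γ * (t + 1)) + Real.exp (γ * (c + t + 1)) = K * (-B) := by
      rw [hKdef, hBdef,
        show c * γ = γ * c by ring,
        show (c + 1) * γ = γ * c + γ by ring,
        show γ * (t + 1) = γ * t + γ by ring,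
        show γ * (c + t + 1) = γ * c + γ * t + γ by ring,
        show γ * (t - c) = γ * t - γ * c by ring]
      simp only [Real.exp_add, Real.exp_sub, Real.exp_neg]
      field_simp
      ring
    have hP : α * (Real.exp (γ * (c + 1)) - Real.exp (γ * (t + 1))) *
        (Real.exp (γ * (c + t + 1)) - Real.exp (γ * c)) = K ^ 2 * (A * D) := by
      rw [hKdef, hAdef, hDdef,
        show γ * (c + 1) = γ * c + γ by ring,
        show γ * (t + 1) = γ * t + γ by ring,
        show γ * (c + t + 1) = γ * c + γ * t + γ by ring,
        show γ * (t - c) = γ * t - γ * c by ring]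
      simp only [Real.exp_add, Real.exp_sub, Real.exp_neg]
      field_simp
    have hsqrtP : Real.sqrt (K ^ 2 * (A * D)) = K * (Real.sqrt A * Real.sqrt D) := by
      rw [Real.sqrt_mul (sq_nonneg _), Real.sqrt_sq hK.le, Real.sqrt_mul hA.le]
    rw [harg, hval, hN, hP, hsqrtP]
    congr 1
    field_simp
end

section
/- At most one pair of non-real critical points: let n, k ≥ 1, let x₁ > x₂ > ⋯ > x_n > 0 and y₁ > y₂ > ⋯ > y_k > 0 be reals, and let t ∈ ℝ. Define the real polynomial P(z) = (t+1)·Π_{i=1}^{n}(1 − x_i z)·Π_{j=1}^{k}(z + y_j) − (1/n)·Σ_{i=1}^{n} Π_{i′≠i}(1 − x_{i′} z)·Π_{j=1}^{k}(z + y_j) − (1/n)·Σ_{j=1}^{k} y_j·Π_{i=1}^{n}(1 − x_i z)·Π_{j′≠j}(z + y_{j′}), i.e. the numerator of the equation (1/n)Σ_{i=1}^{n} 1/(1 − x_i z) + (1/n)Σ_{j=1}^{k} y_j/(z + y_j) = t + 1. Then P has at most two non-real complex roots, counted with multiplicity (equivalently, the equation has at most one pair of complex conjugate solutions, all its other solutions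 being real). -/
open Polynomial

lemma prod_neg_sign (s : Finset ℕ) (f : ℕ → ℝ) (h : ∀ a ∈ s, f a < 0) :
    0 < (-1 : ℝ) ^ s.card * ∏ a ∈ s, f a := by
  classical
  induction s using Finset.induction_on with
  | empty => simp
  | @insert a s ha ih =>
    have h1 : f a < 0 := h a (Finset.mem_insert_self a s)
    have ih' := ih fun b hb => h b (Finset.mem_insert_of_mem hb)
    have key : (-1 : ℝ) ^ (insert a s).card * ∏ b ∈ insert a s, f b =
        (-(f a)) * ((-1) ^ s.card * ∏ b ∈ s, f b) := by
      rw [Finset.prod_insert ha, Finset.card_insert_of_notMem ha, pow_succ]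
      ring
    rw [key]
    exact mul_pos (neg_pos.2 h1) ih'

lemma opp_sign {u v : ℝ} {m : ℕ} (h1 : 0 < (-1 : ℝ) ^ m * u)
    (h2 : 0 < (-1 : ℝ) ^ (m + 1) * v) : u * v < 0 := by
  have hpos := mul_pos h1 h2
  have hone : (-1 : ℝ) ^ m * (-1) ^ m = 1 := by
    rw [← pow_add]
    exact Even.neg_one_pow ⟨m, rfl⟩
  have key : (-1 : ℝ) ^ m * u * ((-1) ^ (m + 1) * v) =
      -(u * v) * ((-1) ^ m * (-1) ^ m) := by ring
  rw [key, hone, mul_one] at hpos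
  linarith

lemma exists_root_Ioo (Q : Polynomial ℝ) {a b : ℝ} (hab : a < b)
    (h : Q.eval a * Q.eval b < 0) : ∃ r ∈ Set.Ioo a b, Q.eval r = 0 := by
  have hc : ContinuousOn (fun z => Q.eval z) (Set.Icc a b) :=
    (Polynomial.continuous Q).continuousOn
  rcases mul_neg_iff.1 h with ⟨ha, hb⟩ | ⟨ha, hb⟩
  · obtain ⟨r, hr, hr0⟩ := intermediate_value_Ioo' hab.le hc ⟨hb, ha⟩
    exact ⟨r, hr, hr0⟩
  · obtain ⟨r, hr, hr0⟩ := intermediate_value_Ioo hab.le hc ⟨ha, hb⟩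
    exact ⟨r, hr, hr0⟩

noncomputable def realNumerator (n k : ℕ) (x y : ℕ → ℝ) (t : ℝ) : Polynomial ℝ :=
  C (t + 1) * (∏ i ∈ Finset.Icc 1 n, (1 - C (x i) * X)) *
      (∏ j ∈ Finset.Icc 1 k, (X + C (y j))) -
    C ((n : ℝ)⁻¹) * ∑ i ∈ Finset.Icc 1 n,
      (∏ i' ∈ (Finset.Icc 1 n).erase i, (1 - C (x i') * X)) *
        (∏ j ∈ Finset.Icc 1 k, (X + C (y j))) -
    C ((n : ℝ)⁻¹) * ∑ j ∈ Finset.Icc 1 k,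
      C (y j) * (∏ i ∈ Finset.Icc 1 n, (1 - C (x i) * X)) *
        (∏ j' ∈ (Finset.Icc 1 k).erase j, (X + C (y j')))

lemma eval_realNumerator_x (n k : ℕ) (x y : ℕ → ℝ) (t : ℝ) (i : ℕ) (hi : i ∈ Finset.Icc 1 n)
    (hx0 : x i ≠ 0) :
    (realNumerator n k x y t).eval (x i)⁻¹ =
      -((n : ℝ)⁻¹ * (∏ i' ∈ (Finset.Icc 1 n).erase i, (1 - x i' * (x i)⁻¹)) *
        ∏ j ∈ Finset.Icc 1 k, ((x i)⁻¹ + y j)) := by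
  have hA : (∏ i' ∈ Finset.Icc 1 n, (1 - x i' * (x i)⁻¹)) = 0 :=
    Finset.prod_eq_zero hi (by field_simp; norm_num)
  have hsum : (∑ i' ∈ Finset.Icc 1 n,
      (∏ i'' ∈ (Finset.Icc 1 n).erase i', (1 - x i'' * (x i)⁻¹)) *
        ∏ j ∈ Finset.Icc 1 k, ((x i)⁻¹ + y j)) =
      (∏ i'' ∈ (Finset.Icc 1 n).erase i, (1 - x i'' * (x i)⁻¹)) *
        ∏ j ∈ Finset.Icc 1 k, ((x i)⁻¹ + y j) := by
    refine Finset.sum_eq_single i (fun i' hi' hne => ?_) (fun h => absurd hi h)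
    have : (∏ i'' ∈ (Finset.Icc 1 n).erase i', (1 - x i'' * (x i)⁻¹)) = 0 :=
      Finset.prod_eq_zero (Finset.mem_erase.mpr ⟨hne.symm, hi⟩) (by field_simp; norm_num)
    rw [this, zero_mul]
  simp only [realNumerator, eval_sub, eval_mul, eval_prod, eval_finset_sum, eval_C, eval_X,
    eval_add, eval_one]
  rw [hA, hsum]
  simp only [zero_mul, mul_zero, Finset.sum_const_zero]
  ring

lemma eval_realNumerator_y (n k : ℕ) (x y : ℕ → ℝ) (t : ℝ) (j : ℕ) (hj : j ∈ Finset.Icc 1 k) :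
    (realNumerator n k x y t).eval (-(y j)) =
      -((n : ℝ)⁻¹ * (y j * ∏ i ∈ Finset.Icc 1 n, (1 + x i * y j)) *
        ∏ j' ∈ (Finset.Icc 1 k).erase j, (y j' - y j)) := by
  have hB : (∏ j' ∈ Finset.Icc 1 k, (-(y j) + y j')) = 0 :=
    Finset.prod_eq_zero hj (by ring)
  have hsum : (∑ j' ∈ Finset.Icc 1 k,
      y j' * (∏ i ∈ Finset.Icc 1 n, (1 - x i * -(y j))) *
        ∏ j'' ∈ (Finset.Icc 1 k).erase j', (-(y j) + y j'')) =
      y j * (∏ i ∈ Finset.Icc 1 n, (1 - x i * -(y j))) *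
        ∏ j'' ∈ (Finset.Icc 1 k).erase j, (-(y j) + y j'') := by
    refine Finset.sum_eq_single j (fun j' hj' hne => ?_) (fun h => absurd hj h)
    have : (∏ j'' ∈ (Finset.Icc 1 k).erase j', (-(y j) + y j'')) = 0 :=
      Finset.prod_eq_zero (Finset.mem_erase.mpr ⟨hne.symm, hj⟩) (by ring)
    rw [this, mul_zero]
  simp only [realNumerator, eval_sub, eval_mul, eval_prod, eval_finset_sum, eval_C, eval_X,
    eval_add, eval_one, eval_neg]
  rw [hB, hsum]
  have h1 : (∏ i ∈ Finset.Icc 1 n, (1 - x i * -(y j))) = ∏ i ∈ Finset.Icc 1 n, (1 + x i * y j) := by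
    refine Finset.prod_congr rfl fun i _ => by ring
  have h2 : (∏ j'' ∈ (Finset.Icc 1 k).erase j, (-(y j) + y j'')) =
      ∏ j'' ∈ (Finset.Icc 1 k).erase j, (y j'' - y j) := by
    refine Finset.prod_congr rfl fun j'' _ => by ring
  rw [h1, h2]
  simp only [zero_mul, mul_zero, Finset.sum_const_zero]
  ring

lemma sign_x (n k : ℕ) (x y : ℕ → ℝ) (t : ℝ)
    (hxpos : ∀ i ∈ Finset.Icc 1 n, 0 < x i)
    (hypos : ∀ j ∈ Finset.Icc 1 k, 0 < y j)
    (hxmono : ∀ i ∈ Finset.Icc 1 n, ∀ i' ∈ Finset.Icc 1 n, i < i' → x i' < x i)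
    (i : ℕ) (hi : i ∈ Finset.Icc 1 n) :
    0 < (-1 : ℝ) ^ i * (realNumerator n k x y t).eval (x i)⁻¹ := by
  obtain ⟨hi1, hi2⟩ := Finset.mem_Icc.mp hi
  have hxi : 0 < x i := hxpos i hi
  rw [eval_realNumerator_x n k x y t i hi hxi.ne']
  have hsplit := (Finset.prod_filter_mul_prod_filter_not ((Finset.Icc 1 n).erase i)
      (fun a => a < i) (fun a => 1 - x a * (x i)⁻¹)).symm
  have hp1 : 0 < (-1 : ℝ) ^ (i - 1) *
      ∏ a ∈ ((Finset.Icc 1 n).erase i).filter (fun a => a < i), (1 - x a * (x i)⁻¹) := by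
    have hcard : (((Finset.Icc 1 n).erase i).filter (fun a => a < i)).card = i - 1 := by
      have hf : ((Finset.Icc 1 n).erase i).filter (fun a => a < i) = Finset.Icc 1 (i - 1) := by
        ext a
        simp only [Finset.mem_filter, Finset.mem_erase, Finset.mem_Icc]
        omega
      rw [hf, Nat.card_Icc]; omega
    rw [← hcard]
    refine prod_neg_sign _ _ fun a ha => ?_
    simp only [Finset.mem_filter, Finset.mem_erase, Finset.mem_Icc] at ha
    have hax : x i < x a :=
      hxmono a (Finset.mem_Icc.mpr ⟨ha.1.2.1, ha.1.2.2⟩) i hi ha.2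
    have h1 : 1 < x a * (x i)⁻¹ := by
      rw [← div_eq_mul_inv]
      exact (one_lt_div hxi).mpr hax
    linarith
  have hp2 : 0 < ∏ a ∈ ((Finset.Icc 1 n).erase i).filter (fun a => ¬ a < i),
      (1 - x a * (x i)⁻¹) := by
    refine Finset.prod_pos fun a ha => ?_
    simp only [Finset.mem_filter, Finset.mem_erase, Finset.mem_Icc] at ha
    have hia : i < a := by omega
    have hamem : a ∈ Finset.Icc 1 n := Finset.mem_Icc.mpr ⟨ha.1.2.1, ha.1.2.2⟩
    have hax : x a < x i := hxmono i hi a hamem hia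
    have h1 : x a * (x i)⁻¹ < 1 := by
      rw [← div_eq_mul_inv]
      exact (div_lt_one hxi).mpr hax
    linarith
  have hq : 0 < ∏ j ∈ Finset.Icc 1 k, ((x i)⁻¹ + y j) :=
    Finset.prod_pos fun j hj => add_pos (inv_pos.mpr hxi) (hypos j hj)
  have hn0 : 0 < ((n : ℝ))⁻¹ := inv_pos.mpr (by exact_mod_cast Nat.pos_of_ne_zero (by omega))
  obtain ⟨m, rfl⟩ : ∃ m, i = m + 1 := ⟨i - 1, by omega⟩
  simp only [Nat.add_sub_cancel] at hp1
  rw [hsplit]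
  set P1 := ∏ a ∈ ((Finset.Icc 1 n).erase (m + 1)).filter (fun a => a < m + 1),
      (1 - x a * (x (m + 1))⁻¹) with hP1
  set P2 := ∏ a ∈ ((Finset.Icc 1 n).erase (m + 1)).filter (fun a => ¬ a < m + 1),
      (1 - x a * (x (m + 1))⁻¹) with hP2
  set Q := ∏ j ∈ Finset.Icc 1 k, ((x (m + 1))⁻¹ + y j) with hQ
  have key : (-1 : ℝ) ^ (m + 1) * -((n : ℝ)⁻¹ * (P1 * P2) * Q) =
      ((-1) ^ m * P1) * ((n : ℝ)⁻¹ * P2 * Q) := by ring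
  rw [key]
  exact mul_pos hp1 (mul_pos (mul_pos hn0 hp2) hq)

lemma sign_y (n k : ℕ) (x y : ℕ → ℝ) (t : ℝ)
    (hxpos : ∀ i ∈ Finset.Icc 1 n, 0 < x i)
    (hypos : ∀ j ∈ Finset.Icc 1 k, 0 < y j)
    (hymono : ∀ j ∈ Finset.Icc 1 k, ∀ j' ∈ Finset.Icc 1 k, j < j' → y j' < y j)
    (hn : 1 ≤ n)
    (j : ℕ) (hj : j ∈ Finset.Icc 1 k) :
    0 < (-1 : ℝ) ^ (k + j + 1) * (realNumerator n k x y t).eval (-(y j)) := by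
  obtain ⟨hj1, hj2⟩ := Finset.mem_Icc.mp hj
  have hyj : 0 < y j := hypos j hj
  rw [eval_realNumerator_y n k x y t j hj]
  have hsplit := (Finset.prod_filter_mul_prod_filter_not ((Finset.Icc 1 k).erase j)
      (fun a => j < a) (fun a => y a - y j)).symm
  have hq2 : 0 < (-1 : ℝ) ^ (k - j) *
      ∏ a ∈ ((Finset.Icc 1 k).erase j).filter (fun a => j < a), (y a - y j) := by
    have hcard : (((Finset.Icc 1 k).erase j).filter (fun a => j < a)).card = k - j := by
      have hf : ((Finset.Icc 1 k).erase j).filter (fun a => j < a) = Finset.Icc (j + 1) k := by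
        ext a
        simp only [Finset.mem_filter, Finset.mem_erase, Finset.mem_Icc]
        omega
      rw [hf, Nat.card_Icc]; omega
    rw [← hcard]
    refine prod_neg_sign _ _ fun a ha => ?_
    simp only [Finset.mem_filter, Finset.mem_erase, Finset.mem_Icc] at ha
    have hamem : a ∈ Finset.Icc 1 k := Finset.mem_Icc.mpr ⟨ha.1.2.1, ha.1.2.2⟩
    have : y a < y j := hymono j hj a hamem ha.2
    linarith
  have hq1 : 0 < ∏ a ∈ ((Finset.Icc 1 k).erase j).filter (fun a => ¬ j < a), (y a - y j) := by
    refine Finset.prod_pos fun a ha => ?_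
    simp only [Finset.mem_filter, Finset.mem_erase, Finset.mem_Icc] at ha
    have haj : a < j := by omega
    have hamem : a ∈ Finset.Icc 1 k := Finset.mem_Icc.mpr ⟨ha.1.2.1, ha.1.2.2⟩
    have : y j < y a := hymono a hamem j hj haj
    linarith
  have hA : 0 < ∏ i ∈ Finset.Icc 1 n, (1 + x i * y j) :=
    Finset.prod_pos fun i hi => by nlinarith [hxpos i hi]
  have hn0 : 0 < ((n : ℝ))⁻¹ := inv_pos.mpr (by exact_mod_cast Nat.pos_of_ne_zero (by omega))
  obtain ⟨m, hm⟩ : ∃ m, k = j + m := ⟨k - j, by omega⟩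
  have hkj : k - j = m := by omega
  rw [hkj] at hq2
  have hE : (-1 : ℝ) ^ (k + j + 1) = (-1) ^ (m + 1) := by
    have h0 : k + j + 1 = (m + 1) + 2 * j := by omega
    rw [h0, pow_add, pow_mul, neg_one_sq, one_pow, mul_one]
  rw [hE, hsplit]
  set Q2 := ∏ a ∈ ((Finset.Icc 1 k).erase j).filter (fun a => j < a), (y a - y j) with hQ2
  set Q1 := ∏ a ∈ ((Finset.Icc 1 k).erase j).filter (fun a => ¬ j < a), (y a - y j) with hQ1
  set A := ∏ i ∈ Finset.Icc 1 n, (1 + x i * y j) with hA'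
  have key : (-1 : ℝ) ^ (m + 1) * -((n : ℝ)⁻¹ * (y j * A) * (Q2 * Q1)) =
      ((-1) ^ m * Q2) * ((n : ℝ)⁻¹ * y j * A * Q1) := by ring
  rw [key]
  exact mul_pos hq2 (mul_pos (mul_pos (mul_pos hn0 hyj) hA) hq1)

open Polynomial in
/-- The numerator polynomial of the critical-point equation
`(1/n)Σᵢ 1/(1 - xᵢz) + (1/n)Σⱼ yⱼ/(z + yⱼ) = t + 1`:
`P(z) = (t+1)·∏ᵢ(1 - xᵢz)·∏ⱼ(z + yⱼ) - (1/n)Σᵢ ∏_{i'≠i}(1 - x_{i'}z)·∏ⱼ(z + yⱼ)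
  - (1/n)Σⱼ yⱼ·∏ᵢ(1 - xᵢz)·∏_{j'≠j}(z + y_{j'})`. -/
noncomputable def criticalNumerator (n k : ℕ) (x y : ℕ → ℝ) (t : ℝ) : Polynomial ℂ :=
  C ((t : ℂ) + 1) * (∏ i ∈ Finset.Icc 1 n, (1 - C (x i : ℂ) * X)) *
      (∏ j ∈ Finset.Icc 1 k, (X + C (y j : ℂ))) -
    C ((n : ℂ)⁻¹) * ∑ i ∈ Finset.Icc 1 n,
      (∏ i' ∈ (Finset.Icc 1 n).erase i, (1 - C (x i' : ℂ) * X)) *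
        (∏ j ∈ Finset.Icc 1 k, (X + C (y j : ℂ))) -
    C ((n : ℂ)⁻¹) * ∑ j ∈ Finset.Icc 1 k,
      C (y j : ℂ) * (∏ i ∈ Finset.Icc 1 n, (1 - C (x i : ℂ) * X)) *
        (∏ j' ∈ (Finset.Icc 1 k).erase j, (X + C (y j' : ℂ)))

lemma map_realNumerator (n k : ℕ) (x y : ℕ → ℝ) (t : ℝ) :
    (realNumerator n k x y t).map (algebraMap ℝ ℂ) = criticalNumerator n k x y t := by
  simp [realNumerator, criticalNumerator, Polynomial.map_sub, Polynomial.map_mul,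
    Polynomial.map_prod, Polynomial.map_sum, Polynomial.map_one, map_C, map_X,
    Complex.coe_algebraMap, Complex.ofReal_add, Complex.ofReal_one, Complex.ofReal_inv,
    Complex.ofReal_natCast]

lemma natDegree_realNumerator_le (n k : ℕ) (x y : ℕ → ℝ) (t : ℝ) :
    (realNumerator n k x y t).natDegree ≤ n + k := by
  have hx : ∀ (s : Finset ℕ), (∏ i ∈ s, (1 - C (x i) * X)).natDegree ≤ s.card := by
    intro s
    refine le_trans (Polynomial.natDegree_prod_le _ _) ?_
    calc ∑ i ∈ s, (1 - C (x i) * X).natDegree ≤ ∑ i ∈ s, 1 := by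
          refine Finset.sum_le_sum fun i _ => ?_
          refine le_trans (Polynomial.natDegree_sub_le _ _) ?_
          simp [Polynomial.natDegree_C_mul_le]
          exact Polynomial.natDegree_C_mul_le _ _ |>.trans (by simp)
      _ = s.card := by simp
  have hy : ∀ (s : Finset ℕ), (∏ j ∈ s, (X + C (y j))).natDegree ≤ s.card := by
    intro s
    refine le_trans (Polynomial.natDegree_prod_le _ _) ?_
    calc ∑ j ∈ s, (X + C (y j)).natDegree ≤ ∑ j ∈ s, 1 := by
          refine Finset.sum_le_sum fun j _ => ?_
          refine le_trans (Polynomial.natDegree_add_le _ _) ?_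
          simp
      _ = s.card := by simp
  have hcn : (Finset.Icc 1 n).card = n := by simp
  have hck : (Finset.Icc 1 k).card = k := by simp
  refine le_trans (Polynomial.natDegree_sub_le _ _) ?_
  rw [max_le_iff]
  constructor
  · refine le_trans (Polynomial.natDegree_sub_le _ _) ?_
    rw [max_le_iff]
    constructor
    · refine le_trans (Polynomial.natDegree_mul_le) ?_
      have h1 : (C (t+1) * ∏ i ∈ Finset.Icc 1 n, (1 - C (x i) * X)).natDegree ≤ n := by
        refine le_trans Polynomial.natDegree_mul_le ?_
        have := hx (Finset.Icc 1 n); simp at this ⊢; omega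
      have h2 := hy (Finset.Icc 1 k)
      simp at h2; omega
    · refine le_trans (Polynomial.natDegree_mul_le) ?_
      have : (∑ i ∈ Finset.Icc 1 n, (∏ i' ∈ (Finset.Icc 1 n).erase i, (1 - C (x i') * X)) *
          (∏ j ∈ Finset.Icc 1 k, (X + C (y j)))).natDegree ≤ n + k := by
        refine Polynomial.natDegree_sum_le_of_forall_le _ _ fun i hi => ?_
        refine le_trans Polynomial.natDegree_mul_le ?_
        have h1 := hx ((Finset.Icc 1 n).erase i)
        have h2 := hy (Finset.Icc 1 k)
        have : ((Finset.Icc 1 n).erase i).card ≤ n := le_trans (Finset.card_erase_le) (by simp)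
        omega
      simpa using this
  · refine le_trans (Polynomial.natDegree_mul_le) ?_
    have : (∑ j ∈ Finset.Icc 1 k, C (y j) * (∏ i ∈ Finset.Icc 1 n, (1 - C (x i) * X)) *
        (∏ j' ∈ (Finset.Icc 1 k).erase j, (X + C (y j')))).natDegree ≤ n + k := by
      refine Polynomial.natDegree_sum_le_of_forall_le _ _ fun j hj => ?_
      refine le_trans Polynomial.natDegree_mul_le ?_
      have h1 := hx (Finset.Icc 1 n)
      have h2 := hy ((Finset.Icc 1 k).erase j)
      have h3 : ((Finset.Icc 1 k).erase j).card ≤ k := le_trans (Finset.card_erase_le) (by simp)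
      have h4 : (C (y j) * ∏ i ∈ Finset.Icc 1 n, (1 - C (x i) * X)).natDegree ≤ n :=
        le_trans Polynomial.natDegree_mul_le (by simp at h1 ⊢; omega)
      simp at h1 h2 ⊢
      omega
    simpa using this

/-- **At most one pair of non-real critical points**: for decreasing positive parameters
`x₁ > ⋯ > x_n > 0` and `y₁ > ⋯ > y_k > 0` and any real `t`, the numerator polynomial of
the critical-point equation has at most two non-real complex roots counted with
multiplicity. -/
theorem at_most_one_conjugate_pair (n k : ℕ) (hn : 1 ≤ n) (hk : 1 ≤ k)
    (x y : ℕ → ℝ) (t : ℝ)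
    (hxpos : ∀ i ∈ Finset.Icc 1 n, 0 < x i)
    (hypos : ∀ j ∈ Finset.Icc 1 k, 0 < y j)
    (hxmono : ∀ i ∈ Finset.Icc 1 n, ∀ i' ∈ Finset.Icc 1 n, i < i' → x i' < x i)
    (hymono : ∀ j ∈ Finset.Icc 1 k, ∀ j' ∈ Finset.Icc 1 k, j < j' → y j' < y j) :
    Multiset.card
      ((criticalNumerator n k x y t).roots.filter (fun z : ℂ => z.im ≠ 0)) ≤ 2 := by
  classical
  by_cases hP : criticalNumerator n k x y t = 0
  · simp [hP]
  set Q := realNumerator n k x y t with hQdef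
  have hroots_x : ∀ i ∈ Finset.Icc 1 (n - 1),
      ∃ r, r ∈ Set.Ioo ((x i)⁻¹) ((x (i + 1))⁻¹) ∧ Q.eval r = 0 := by
    intro i hi
    obtain ⟨h1, h2⟩ := Finset.mem_Icc.mp hi
    have hi1 : i ∈ Finset.Icc 1 n := Finset.mem_Icc.mpr ⟨h1, by omega⟩
    have hi2 : i + 1 ∈ Finset.Icc 1 n := Finset.mem_Icc.mpr ⟨by omega, by omega⟩
    have s1 := sign_x n k x y t hxpos hypos hxmono i hi1
    have s2 := sign_x n k x y t hxpos hypos hxmono (i + 1) hi2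
    have hlt : (x i)⁻¹ < (x (i + 1))⁻¹ := by
      have hx2 : 0 < x (i + 1) := hxpos _ hi2
      have hxx := hxmono i hi1 (i + 1) hi2 (lt_add_one i)
      exact inv_strictAnti₀ hx2 hxx
    exact exists_root_Ioo Q hlt (opp_sign s1 s2)
  have hroots_y : ∀ j ∈ Finset.Icc 1 (k - 1),
      ∃ r, r ∈ Set.Ioo (-(y j)) (-(y (j + 1))) ∧ Q.eval r = 0 := by
    intro j hj
    obtain ⟨h1, h2⟩ := Finset.mem_Icc.mp hj
    have hj1 : j ∈ Finset.Icc 1 k := Finset.mem_Icc.mpr ⟨h1, by omega⟩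
    have hj2 : j + 1 ∈ Finset.Icc 1 k := Finset.mem_Icc.mpr ⟨by omega, by omega⟩
    have s1 := sign_y n k x y t hxpos hypos hymono hn j hj1
    have s2 := sign_y n k x y t hxpos hypos hymono hn (j + 1) hj2
    have hexp : k + (j + 1) + 1 = (k + j + 1) + 1 := by ring
    rw [hexp] at s2
    have hlt : -(y j) < -(y (j + 1)) :=
      neg_lt_neg (hymono j hj1 (j + 1) hj2 (lt_add_one j))
    exact exists_root_Ioo Q hlt (opp_sign s1 s2)
  choose! r hr using hroots_x
  choose! s hs using hroots_y
  have hrmono : ∀ i ∈ Finset.Icc 1 (n - 1), ∀ i' ∈ Finset.Icc 1 (n - 1),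
      i < i' → r i < r i' := by
    intro i hi i' hi' hii
    obtain ⟨ha1, ha2⟩ := Finset.mem_Icc.mp hi
    obtain ⟨hb1, hb2⟩ := Finset.mem_Icc.mp hi'
    have hmem1 : i + 1 ∈ Finset.Icc 1 n := Finset.mem_Icc.mpr ⟨by omega, by omega⟩
    have hmem2 : i' ∈ Finset.Icc 1 n := Finset.mem_Icc.mpr ⟨by omega, by omega⟩
    have h1 := (hr i hi).1.2
    have h2 := (hr i' hi').1.1
    have hle : (x (i + 1))⁻¹ ≤ (x i')⁻¹ := by
      rcases eq_or_lt_of_le (show i + 1 ≤ i' by omega) with h | h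
      · rw [h]
      · exact inv_anti₀ (hxpos i' hmem2) (hxmono (i + 1) hmem1 i' hmem2 h).le
    linarith
  have hsmono : ∀ j ∈ Finset.Icc 1 (k - 1), ∀ j' ∈ Finset.Icc 1 (k - 1),
      j < j' → s j < s j' := by
    intro j hj j' hj' hjj
    obtain ⟨ha1, ha2⟩ := Finset.mem_Icc.mp hj
    obtain ⟨hb1, hb2⟩ := Finset.mem_Icc.mp hj'
    have hmem1 : j + 1 ∈ Finset.Icc 1 k := Finset.mem_Icc.mpr ⟨by omega, by omega⟩
    have hmem2 : j' ∈ Finset.Icc 1 k := Finset.mem_Icc.mpr ⟨by omega, by omega⟩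
    have h1 := (hs j hj).1.2
    have h2 := (hs j' hj').1.1
    have hle : -(y (j + 1)) ≤ -(y j') := by
      rcases eq_or_lt_of_le (show j + 1 ≤ j' by omega) with h | h
      · rw [h]
      · exact neg_le_neg (hymono (j + 1) hmem1 j' hmem2 h).le
    linarith
  have hrpos : ∀ i ∈ Finset.Icc 1 (n - 1), 0 < r i := by
    intro i hi
    obtain ⟨h1, h2⟩ := Finset.mem_Icc.mp hi
    have hmem : i ∈ Finset.Icc 1 n := Finset.mem_Icc.mpr ⟨h1, by omega⟩
    exact lt_trans (inv_pos.mpr (hxpos i hmem)) (hr i hi).1.1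
  have hsneg : ∀ j ∈ Finset.Icc 1 (k - 1), s j < 0 := by
    intro j hj
    obtain ⟨h1, h2⟩ := Finset.mem_Icc.mp hj
    have hmem : j + 1 ∈ Finset.Icc 1 k := Finset.mem_Icc.mpr ⟨by omega, by omega⟩
    have := (hs j hj).1.2
    have h0 : -(y (j + 1)) < 0 := neg_neg_iff_pos.mpr (hypos _ hmem)
    linarith
  set T1 := (Finset.Icc 1 (n - 1)).image r with hT1
  set T2 := (Finset.Icc 1 (k - 1)).image s with hT2
  have hT1card : T1.card = n - 1 := by
    rw [hT1, Finset.card_image_of_injOn, Nat.card_Icc]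
    · omega
    · intro a ha b hb hab
      rcases lt_trichotomy a b with h | h | h
      · exact absurd hab (ne_of_lt (hrmono a ha b hb h))
      · exact h
      · exact absurd hab.symm (ne_of_lt (hrmono b hb a ha h))
  have hT2card : T2.card = k - 1 := by
    rw [hT2, Finset.card_image_of_injOn, Nat.card_Icc]
    · omega
    · intro a ha b hb hab
      rcases lt_trichotomy a b with h | h | h
      · exact absurd hab (ne_of_lt (hsmono a ha b hb h))
      · exact h
      · exact absurd hab.symm (ne_of_lt (hsmono b hb a ha h))
  have hdisj : Disjoint T1 T2 := by
    rw [Finset.disjoint_left]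
    intro a ha1 ha2
    obtain ⟨i, hi, rfl⟩ := Finset.mem_image.mp ha1
    obtain ⟨j, hj, hj'⟩ := Finset.mem_image.mp ha2
    have := hrpos i hi
    have := hsneg j hj
    linarith [hj' ▸ this]
  set T := T1 ∪ T2 with hT
  have hTcard : T.card = (n - 1) + (k - 1) := by
    rw [hT, Finset.card_union_of_disjoint hdisj, hT1card, hT2card]
  have hTroot : ∀ a ∈ T, Q.eval a = 0 := by
    intro a ha
    rcases Finset.mem_union.mp ha with h | h
    · obtain ⟨i, hi, rfl⟩ := Finset.mem_image.mp h
      exact (hr i hi).2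
    · obtain ⟨j, hj, rfl⟩ := Finset.mem_image.mp h
      exact (hs j hj).2
  have hmap : Q.map (algebraMap ℝ ℂ) = criticalNumerator n k x y t :=
    map_realNumerator n k x y t
  have hroot : ∀ a ∈ T, (a : ℂ) ∈ (criticalNumerator n k x y t).roots := by
    intro a ha
    rw [Polynomial.mem_roots hP]
    have heval : (criticalNumerator n k x y t).eval (algebraMap ℝ ℂ a) =
        algebraMap ℝ ℂ (Q.eval a) := by
      rw [← hmap, eval_map, Polynomial.eval₂_at_apply]
    have : (criticalNumerator n k x y t).eval ((a : ℝ) : ℂ) = 0 := by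
      rw [show ((a : ℝ) : ℂ) = algebraMap ℝ ℂ a from rfl, heval, hTroot a ha, map_zero]
    exact this
  set T' := T.image (fun a : ℝ => (a : ℂ)) with hT'
  have hT'card : T'.card = T.card :=
    Finset.card_image_of_injective _ Complex.ofReal_injective
  have hsub : T'.val ≤ (criticalNumerator n k x y t).roots.filter
      (fun z : ℂ => ¬ z.im ≠ 0) := by
    rw [Multiset.le_iff_count]
    intro a
    by_cases haT : a ∈ T'
    · have h1 : Multiset.count a T'.val ≤ 1 :=
        Multiset.nodup_iff_count_le_one.mp T'.nodup a
      have h2 : a ∈ (criticalNumerator n k x y t).roots.filter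
          (fun z : ℂ => ¬ z.im ≠ 0) := by
        obtain ⟨b, hb, rfl⟩ := Finset.mem_image.mp haT
        refine Multiset.mem_filter.mpr ⟨hroot b hb, ?_⟩
        simp
      exact le_trans h1 (Multiset.one_le_count_iff_mem.mpr h2)
    · rw [Multiset.count_eq_zero_of_notMem haT]
      exact Nat.zero_le _
  have hcount1 : (n - 1) + (k - 1) ≤ Multiset.card
      ((criticalNumerator n k x y t).roots.filter (fun z : ℂ => ¬ z.im ≠ 0)) := by
    have h := Multiset.card_le_card hsub
    have hcv : Multiset.card T'.val = T'.card := (Finset.card_def T').symm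
    rwa [hcv, hT'card, hTcard] at h
  have hdeg : Multiset.card (criticalNumerator n k x y t).roots ≤ n + k := by
    refine le_trans (Polynomial.card_roots' _) ?_
    rw [← hmap]
    exact le_trans Polynomial.natDegree_map_le (natDegree_realNumerator_le n k x y t)
  have hpart : Multiset.card
        ((criticalNumerator n k x y t).roots.filter (fun z : ℂ => z.im ≠ 0)) +
      Multiset.card
        ((criticalNumerator n k x y t).roots.filter (fun z : ℂ => ¬ z.im ≠ 0)) =
      Multiset.card (criticalNumerator n k x y t).roots := by
    rw [← Multiset.card_add, Multiset.filter_add_not]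
  omega
end
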